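/- Let G be a connected finite simple graph of order n ≥ 12 in which every pair of distinct nonadjacent vertices has degree sum at least n − 2, and suppose m(G,2) > 2. Let I be a set of maximum cardinality among all closures ⟨A⟩ of two-element sets A ⊆ V(G) under 2-neighbor bootstrap percolation, and let U = V(G) ∖ I. Suppose v ∈ I has at least two neighbors in U, and x ∈ I ∖ {v} has at least one neighbor in U. Then: v has exactly one neighbor in I; v and x are the only vertices of I having a neighbor in U; x has exactly one neighbor in U; and v is adjacent to every vertex of U except the unique neighbor of x in U. -/
import Mathlib


open Finset
open scoped Classical

/-- One step of the `r`-neighbor bootstrap percolation process: all currently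
active vertices stay active, and every vertex with at least `r` active
neighbors becomes active. -/
noncomputable def bootStep {V : Type*} [Fintype V] (G : SimpleGraph V) (r : ℕ)
    (A : Finset V) : Finset V :=
  A ∪ Finset.univ.filter (fun v => r ≤ (G.neighborFinset v ∩ A).card)

/-- The closure of `A` under `r`-neighbor bootstrap percolation, i.e. `⋃ₜ Aₜ`.
Since the process is monotone on a finite vertex set, iterating `|V|` times
reaches the fixed point. -/
noncomputable def bootClosure {V : Type*} [Fintype V] (G : SimpleGraph V) (r : ℕ)
    (A : Finset V) : Finset V :=
  (bootStep G r)^[Fintype.card V] A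

/-- `G` `r`-percolates from the initially active set `A`. -/
def Percolates {V : Type*} [Fintype V] (G : SimpleGraph V) (r : ℕ)
    (A : Finset V) : Prop :=
  ∃ t : ℕ, (bootStep G r)^[t] A = Finset.univ

/-- `m(G, r)`: the minimum size of an `r`-contagious set in `G`. -/
noncomputable def minContagious {V : Type*} [Fintype V] (G : SimpleGraph V) (r : ℕ) : ℕ :=
  sInf {k : ℕ | ∃ A : Finset V, A.card = k ∧ Percolates G r A}

section Infra
variable {V : Type*} [Fintype V] {G : SimpleGraph V} {r : ℕ}

lemma subset_bootStep (A : Finset V) : A ⊆ bootStep G r A :=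
  Finset.subset_union_left

lemma mem_bootStep_of {y : V} {A : Finset V}
    (h : r ≤ (G.neighborFinset y ∩ A).card) : y ∈ bootStep G r A :=
  Finset.mem_union.2 (Or.inr (Finset.mem_filter.2 ⟨Finset.mem_univ _, h⟩))

lemma bootStep_mono {A B : Finset V} (h : A ⊆ B) : bootStep G r A ⊆ bootStep G r B := by
  intro y hy
  rcases Finset.mem_union.1 hy with h1 | h1
  · exact Finset.mem_union.2 (Or.inl (h h1))
  · simp only [Finset.mem_filter, Finset.mem_univ, true_and] at h1
    exact mem_bootStep_of (le_trans h1 (Finset.card_le_card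
      (Finset.inter_subset_inter (le_refl _) h)))

lemma subset_bootClosure (A : Finset V) : A ⊆ bootClosure G r A := by
  show A ⊆ (bootStep G r)^[Fintype.card V] A
  induction (Fintype.card V) with
  | zero => exact Finset.Subset.refl A
  | succ n ih =>
    rw [Function.iterate_succ_apply']
    exact ih.trans (subset_bootStep _)

lemma bootClosure_closed (A : Finset V) :
    bootStep G r (bootClosure G r A) = bootClosure G r A := by
  have aux : ∀ k : ℕ, k ≤ ((bootStep G r)^[k] A).card ∨
      bootStep G r ((bootStep G r)^[k] A) = (bootStep G r)^[k] A := by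
    intro k
    induction k with
    | zero => exact Or.inl (Nat.zero_le _)
    | succ k ih =>
      rcases ih with h | h
      · by_cases hfix : bootStep G r ((bootStep G r)^[k] A) = (bootStep G r)^[k] A
        · right
          rw [Function.iterate_succ_apply', hfix, hfix]
        · left
          rw [Function.iterate_succ_apply']
          have hss : (bootStep G r)^[k] A ⊂ bootStep G r ((bootStep G r)^[k] A) :=
            Finset.ssubset_iff_subset_ne.2 ⟨subset_bootStep _, fun h' => hfix h'.symm⟩
          have := Finset.card_lt_card hss
          omega
      · right
        rw [Function.iterate_succ_apply', h, h]
  rcases aux (Fintype.card V) with h | h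
  · have hcard : ((bootStep G r)^[Fintype.card V] A).card = Fintype.card V :=
      le_antisymm (Finset.card_le_univ _) h
    have huniv : (bootStep G r)^[Fintype.card V] A = Finset.univ :=
      Finset.eq_univ_of_card _ hcard
    show bootStep G r ((bootStep G r)^[Fintype.card V] A) = (bootStep G r)^[Fintype.card V] A
    rw [huniv]
    exact Finset.Subset.antisymm (Finset.subset_univ _) (subset_bootStep _)
  · exact h

lemma mem_bootClosure_of {X : Finset V} {A : Finset V} {y : V}
    (hX : X ⊆ bootClosure G r A) (hy : r ≤ (G.neighborFinset y ∩ X).card) :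
    y ∈ bootClosure G r A := by
  have : y ∈ bootStep G r (bootClosure G r A) :=
    mem_bootStep_of (le_trans hy (Finset.card_le_card
      (Finset.inter_subset_inter (le_refl _) hX)))
  rwa [bootClosure_closed] at this

/-- if a set is closed (a fixed point of `bootStep`) and `y ∉ S` then `y` has
fewer than `r` neighbours in `S`. -/
lemma nbrs_lt_of_notMem {S : Finset V} {y : V}
    (hS : bootStep G r S = S) (hy : y ∉ S) :
    (G.neighborFinset y ∩ S).card < r := by
  by_contra h
  push_neg at h
  exact hy (hS ▸ mem_bootStep_of h)

lemma card_inter_ge {X Y W : Finset V} (hX : X ⊆ W) (hY : Y ⊆ W) :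
    X.card + Y.card ≤ W.card + (X ∩ Y).card := by
  have h1 := Finset.card_union_add_card_inter X Y
  have h2 : (X ∪ Y).card ≤ W.card := Finset.card_le_card (Finset.union_subset hX hY)
  omega

lemma sum_adj_comm (I U : Finset V) :
    ∑ z ∈ I, (G.neighborFinset z ∩ U).card = ∑ u ∈ U, (G.neighborFinset u ∩ I).card := by
  have key : ∀ (Y : Finset V) (z : V), (G.neighborFinset z ∩ Y).card
      = ∑ u ∈ Y, if G.Adj z u then 1 else 0 := by
    intro Y z
    rw [← Finset.sum_filter]
    simp only [Finset.sum_const, smul_eq_mul, mul_one]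
    congr 1
    ext u
    simp [SimpleGraph.mem_neighborFinset, and_comm]
  simp only [key]
  rw [Finset.sum_comm]
  congr 1
  ext u
  congr 1
  ext z
  simp [G.adj_comm]


lemma mem_closure_pair_left (a b : V) : a ∈ bootClosure G r {a, b} :=
  subset_bootClosure _ (by simp)

lemma mem_closure_pair_right (a b : V) : b ∈ bootClosure G r {a, b} :=
  subset_bootClosure _ (by simp)

/-- the workhorse: a vertex adjacent to two distinct members of a closure joins it -/
lemma join_two {A : Finset V} {c d y : V} (hc : c ∈ bootClosure G 2 A)
    (hd : d ∈ bootClosure G 2 A) (hcd : c ≠ d)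
    (hyc : G.Adj y c) (hyd : G.Adj y d) : y ∈ bootClosure G 2 A := by
  apply mem_bootClosure_of (X := {c, d})
  · intro w hw
    rcases Finset.mem_insert.1 hw with rfl | hw
    · exact hc
    · rcases Finset.mem_singleton.1 hw with rfl
      exact hd
  · have hsub : ({c, d} : Finset V) ⊆ G.neighborFinset y ∩ {c, d} := by
      intro w hw
      refine Finset.mem_inter.2 ⟨?_, hw⟩
      rcases Finset.mem_insert.1 hw with rfl | hw
      · exact (SimpleGraph.mem_neighborFinset _ _ _).2 hyc
      · rcases Finset.mem_singleton.1 hw with rfl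
        exact (SimpleGraph.mem_neighborFinset _ _ _).2 hyd
    calc (2 : ℕ) = ({c, d} : Finset V).card := (Finset.card_pair hcd).symm
      _ ≤ _ := Finset.card_le_card hsub


lemma nat_prod_ge {r a : ℕ} (h1 : 1 ≤ r) (h2 : 1 ≤ a) : r + a ≤ r * a + 1 := by
  obtain ⟨r', rfl⟩ := Nat.exists_eq_add_of_le h1
  obtain ⟨a', rfl⟩ := Nat.exists_eq_add_of_le h2
  have h : (1 + r') * (1 + a') = 1 + r' + a' + r' * a' := by ring
  omega

lemma nat_prod_ge2 {r a : ℕ} (h1 : 2 ≤ r) (h2 : 2 ≤ a) : r + a ≤ r * a := by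
  obtain ⟨r', rfl⟩ := Nat.exists_eq_add_of_le h1
  obtain ⟨a', rfl⟩ := Nat.exists_eq_add_of_le h2
  have h : (2 + r') * (2 + a') = 4 + 2 * r' + 2 * a' + r' * a' := by ring
  omega

end Infra
theorem stmt11 {V : Type*} [Fintype V] (G : SimpleGraph V)
    (hconn : G.Connected) (hn : 12 ≤ Fintype.card V)
    (hdeg : ∀ x y : V, x ≠ y → ¬ G.Adj x y →
      Fintype.card V - 2 ≤ G.degree x + G.degree y)
    (hm : 2 < minContagious G 2)
    (I : Finset V)
    (hIcl : ∃ A : Finset V, A.card = 2 ∧ I = bootClosure G 2 A)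
    (hImax : ∀ A : Finset V, A.card = 2 → (bootClosure G 2 A).card ≤ I.card)
    (v : V) (hv : v ∈ I)
    (hv2 : 2 ≤ (G.neighborFinset v ∩ (Finset.univ \ I)).card)
    (x : V) (hx : x ∈ I) (hxv : x ≠ v)
    (hx1 : (G.neighborFinset x ∩ (Finset.univ \ I)).Nonempty) :
    (G.neighborFinset v ∩ I).card = 1 ∧
    (∀ z ∈ I, (G.neighborFinset z ∩ (Finset.univ \ I)).Nonempty → z = v ∨ z = x) ∧
    (G.neighborFinset x ∩ (Finset.univ \ I)).card = 1 ∧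
    (∀ u ∈ Finset.univ \ I, (G.Adj v u ↔ ¬ G.Adj x u)) := by
  classical
  obtain ⟨A₀, hA₀2, hIA⟩ := hIcl
  set U : Finset V := Finset.univ \ I with hUdef
  -- I is closed
  have hIstep : bootStep G 2 I = I := by rw [hIA]; exact bootClosure_closed A₀
  -- membership in U
  have hUmem : ∀ {u : V}, u ∈ U ↔ u ∉ I := by
    intro u; simp [hUdef]
  -- pair closures are bounded
  have hpair : ∀ a b : V, a ≠ b → (bootClosure G 2 {a, b}).card ≤ I.card := by
    intro a b hab
    exact hImax _ (Finset.card_pair hab)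
  -- sizes
  have hst : I.card + U.card = Fintype.card V := by
    have h1 := Finset.card_inter_add_card_sdiff (Finset.univ : Finset V) I
    have h2 : (Finset.univ : Finset V) ∩ I = I := by
      ext z; simp
    rw [h2] at h1
    rw [hUdef]
    simpa [Finset.card_univ] using h1
  -- degree split
  have hsplit : ∀ z : V, G.degree z
      = (G.neighborFinset z ∩ I).card + (G.neighborFinset z ∩ U).card := by
    intro z
    have h1 := Finset.card_inter_add_card_sdiff (G.neighborFinset z) I
    have h2 : G.neighborFinset z \ I = G.neighborFinset z ∩ U := by
      ext w; simp [hUdef]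
    rw [h2] at h1
    exact h1.symm
  -- each vertex of U has at most one neighbour in I
  have hUone : ∀ {u : V}, u ∉ I → (G.neighborFinset u ∩ I).card ≤ 1 := by
    intro u hu
    have := nbrs_lt_of_notMem hIstep hu
    omega
  -- the edge-count bound
  have hsumU : ∑ z ∈ I, (G.neighborFinset z ∩ U).card ≤ U.card := by
    rw [sum_adj_comm]
    calc ∑ u ∈ U, (G.neighborFinset u ∩ I).card ≤ ∑ u ∈ U, 1 := by
          apply Finset.sum_le_sum
          intro u hu
          exact hUone (hUmem.1 hu)
      _ = U.card := by simp
  -- get u1, u2, ux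
  obtain ⟨u1, hu1mem, u2, hu2mem, hu12⟩ := Finset.one_lt_card.1 (lt_of_lt_of_le one_lt_two hv2)
  obtain ⟨ux, huxmem⟩ := hx1
  have hu1U : u1 ∈ U := (Finset.mem_inter.1 hu1mem).2
  have hu2U : u2 ∈ U := (Finset.mem_inter.1 hu2mem).2
  have huxU : ux ∈ U := (Finset.mem_inter.1 huxmem).2
  have hu1nI : u1 ∉ I := hUmem.1 hu1U
  have hu2nI : u2 ∉ I := hUmem.1 hu2U
  have huxnI : ux ∉ I := hUmem.1 huxU
  have hvu1 : G.Adj v u1 := (SimpleGraph.mem_neighborFinset _ _ _).1 (Finset.mem_inter.1 hu1mem).1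
  have hvu2 : G.Adj v u2 := (SimpleGraph.mem_neighborFinset _ _ _).1 (Finset.mem_inter.1 hu2mem).1
  have hxux : G.Adj x ux := (SimpleGraph.mem_neighborFinset _ _ _).1 (Finset.mem_inter.1 huxmem).1
  -- unique neighbours in I
  have huniqNbr : ∀ {u z w : V}, u ∉ I → z ∈ I → w ∈ I → G.Adj u z → G.Adj u w → z = w := by
    intro u z w hu hz hw huz huw
    have hzc : z ∈ G.neighborFinset u ∩ I :=
      Finset.mem_inter.2 ⟨(SimpleGraph.mem_neighborFinset _ _ _).2 huz, hz⟩
    have hwc : w ∈ G.neighborFinset u ∩ I :=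
      Finset.mem_inter.2 ⟨(SimpleGraph.mem_neighborFinset _ _ _).2 huw, hw⟩
    exact Finset.card_le_one.1 (hUone hu) _ hzc _ hwc
  have hNu1 : ∀ {z : V}, z ∈ I → G.Adj u1 z → z = v := fun hz h =>
    huniqNbr hu1nI hz hv h hvu1.symm
  have hNu2 : ∀ {z : V}, z ∈ I → G.Adj u2 z → z = v := fun hz h =>
    huniqNbr hu2nI hz hv h hvu2.symm
  have hNux : ∀ {z : V}, z ∈ I → G.Adj ux z → z = x := fun hz h =>
    huniqNbr huxnI hz hx h hxux.symm
  have hvux : ¬ G.Adj v ux := fun h => hxv ((hNux hv h.symm).symm)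
  have hu1x : ¬ G.Adj u1 x := fun h => hxv (hNu1 hx h)
  have hu2x : ¬ G.Adj u2 x := fun h => hxv (hNu2 hx h)
  have huxne1 : ux ≠ u1 := by
    intro h
    exact hxv (hNu1 hx (h ▸ hxux.symm))
  have huxne2 : ux ≠ u2 := by
    intro h
    exact hxv (hNu2 hx (h ▸ hxux.symm))
  -- |U| ≥ 3
  have ht3 : 3 ≤ U.card := by
    have hsub : ({u1, u2, ux} : Finset V) ⊆ U := by
      intro w hw
      rcases Finset.mem_insert.1 hw with rfl | hw
      · exact hu1U
      rcases Finset.mem_insert.1 hw with rfl | hw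
      · exact hu2U
      rcases Finset.mem_singleton.1 hw with rfl
      exact huxU
    have hcard : ({u1, u2, ux} : Finset V).card = 3 := by
      rw [Finset.card_insert_of_notMem, Finset.card_insert_of_notMem,
        Finset.card_singleton]
      · simp [huxne2.symm]
      · simp [hu12, huxne1.symm]
    calc (3 : ℕ) = ({u1, u2, ux} : Finset V).card := hcard.symm
      _ ≤ U.card := Finset.card_le_card hsub
  -- degree of a U-vertex is at most |U|
  have hdegU : ∀ u ∈ U, G.degree u ≤ U.card := by
    intro u hu
    have h1 : (G.neighborFinset u ∩ I).card ≤ 1 := hUone (hUmem.1 hu)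
    have h2 : G.neighborFinset u ∩ U ⊆ U.erase u := by
      intro w hw
      rcases Finset.mem_inter.1 hw with ⟨hw1, hw2⟩
      exact Finset.mem_erase.2 ⟨((SimpleGraph.mem_neighborFinset _ _ _).1 hw1).ne', hw2⟩
    have h3 : (G.neighborFinset u ∩ U).card ≤ U.card - 1 := by
      calc (G.neighborFinset u ∩ U).card ≤ (U.erase u).card := Finset.card_le_card h2
        _ = U.card - 1 := Finset.card_erase_of_mem hu
    have h4 := hsplit u
    omega
  -- every vertex of I has degree at least |I| - 2
  have hdegI : ∀ z ∈ I, I.card ≤ G.degree z + 2 := by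
    intro z hz
    by_cases hzv : z = v
    · subst hzv
      have hne : z ≠ ux := fun h => huxnI (h ▸ hz)
      have h1 := hdeg z ux hne hvux
      have h2 := hdegU ux huxU
      omega
    · have hne : z ≠ u1 := fun h => hu1nI (h ▸ hz)
      have hnadj : ¬ G.Adj z u1 := fun h => hzv (hNu1 hz h.symm)
      have h1 := hdeg z u1 hne hnadj
      have h2 := hdegU u1 hu1U
      omega
  -- MAIN SIZE FACTS
  -- |I| ≥ 3
  have hs3lb : 3 ≤ I.card := by
    have hJ := hpair u1 u2 (fun h => hu12 h)
    have hvJ : v ∈ bootClosure G 2 {u1, u2} :=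
      join_two (mem_closure_pair_left u1 u2) (mem_closure_pair_right u1 u2) hu12 hvu1 hvu2
    have hsub : insert v ({u1, u2} : Finset V) ⊆ bootClosure G 2 {u1, u2} := by
      intro w hw
      rcases Finset.mem_insert.1 hw with rfl | hw
      · exact hvJ
      · exact subset_bootClosure _ hw
    have hcard : (insert v ({u1, u2} : Finset V)).card = 3 := by
      rw [Finset.card_insert_of_notMem, Finset.card_pair hu12]
      simp only [Finset.mem_insert, Finset.mem_singleton]
      push_neg
      exact ⟨fun h => hu1nI (h ▸ hv), fun h => hu2nI (h ▸ hv)⟩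
    calc (3:ℕ) = _ := hcard.symm
      _ ≤ (bootClosure G 2 {u1, u2}).card := Finset.card_le_card hsub
      _ ≤ I.card := hJ
  have hUclique : ∀ p ∈ U, ∀ q ∈ U, p ≠ q → G.Adj p q := by
    by_contra hcon
    push_neg at hcon
    obtain ⟨p, hpU, q, hqU, hpq, hnadj⟩ := hcon
    have hpnI : p ∉ I := hUmem.1 hpU
    have hqnI : q ∉ I := hUmem.1 hqU
    -- STAGE 1 : |I| = 3
    have hs3 : I.card = 3 := by
      set S := bootClosure G 2 {p, q} with hSdef
      have hSle : S.card ≤ I.card := hpair p q hpq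
      have hpS : p ∈ S := mem_closure_pair_left p q
      have hqS : q ∈ S := mem_closure_pair_right p q
      set X := G.neighborFinset p ∩ U with hXdef
      set Y := G.neighborFinset q ∩ U with hYdef
      set W := (U.erase p).erase q with hWdef
      have hWcard : W.card + 2 = U.card := by
        rw [hWdef, Finset.card_erase_of_mem, Finset.card_erase_of_mem hpU]
        · have : 1 ≤ U.card := le_trans (by norm_num) ht3
          omega
        · exact Finset.mem_erase.2 ⟨hpq.symm, hqU⟩
      have hXW : X ⊆ W := by
        intro w hw
        rcases Finset.mem_inter.1 hw with ⟨hw1, hw2⟩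
        have hadj : G.Adj p w := (SimpleGraph.mem_neighborFinset _ _ _).1 hw1
        refine Finset.mem_erase.2 ⟨?_, Finset.mem_erase.2 ⟨hadj.ne', hw2⟩⟩
        intro h
        exact hnadj (h ▸ hadj)
      have hYW : Y ⊆ W := by
        intro w hw
        rcases Finset.mem_inter.1 hw with ⟨hw1, hw2⟩
        have hadj : G.Adj q w := (SimpleGraph.mem_neighborFinset _ _ _).1 hw1
        refine Finset.mem_erase.2 ⟨hadj.ne', Finset.mem_erase.2 ⟨?_, hw2⟩⟩
        intro h
        exact hnadj (h ▸ hadj).symm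
      -- degree sum from Ore
      have hOre := hdeg p q hpq hnadj
      have hsp := hsplit p
      have hsq := hsplit q
      have hip : (G.neighborFinset p ∩ I).card ≤ 1 := hUone hpnI
      have hiq : (G.neighborFinset q ∩ I).card ≤ 1 := hUone hqnI
      have hXYsum : I.card + U.card ≤ X.card + Y.card + 4 := by
        rw [hXdef, hYdef]
        omega
      have hinter := card_inter_ge hXW hYW
      have hCge : I.card ≤ (X ∩ Y).card + 2 := by omega
      -- all common neighbours join S
      have hCsub : X ∩ Y ⊆ S := by
        intro c hc
        rcases Finset.mem_inter.1 hc with ⟨hcX, hcY⟩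
        have h1 : G.Adj p c := (SimpleGraph.mem_neighborFinset _ _ _).1 (Finset.mem_inter.1 hcX).1
        have h2 : G.Adj q c := (SimpleGraph.mem_neighborFinset _ _ _).1 (Finset.mem_inter.1 hcY).1
        exact join_two hpS hqS hpq h1.symm h2.symm
      have hpnC : p ∉ X ∩ Y := by
        intro h
        have := (Finset.mem_inter.1 (Finset.mem_inter.1 h).1).1
        simp [SimpleGraph.mem_neighborFinset] at this
      have hqnC : q ∉ X ∩ Y := by
        intro h
        have := (Finset.mem_inter.1 (Finset.mem_inter.1 h).2).1
        simp [SimpleGraph.mem_neighborFinset] at this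
      have hins : insert p (insert q (X ∩ Y)) ⊆ S := by
        intro w hw
        rcases Finset.mem_insert.1 hw with rfl | hw
        · exact hpS
        rcases Finset.mem_insert.1 hw with rfl | hw
        · exact hqS
        exact hCsub hw
      have hinscard : (insert p (insert q (X ∩ Y))).card = (X ∩ Y).card + 2 := by
        rw [Finset.card_insert_of_notMem, Finset.card_insert_of_notMem hqnC]
        simp only [Finset.mem_insert]
        push_neg
        exact ⟨hpq, hpnC⟩
      have hSeq : insert p (insert q (X ∩ Y)) = S := by
        apply Finset.eq_of_subset_of_card_le hins
        omega
      have hSU : S ⊆ U := by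
        rw [← hSeq]
        intro w hw
        rcases Finset.mem_insert.1 hw with rfl | hw
        · exact hpU
        rcases Finset.mem_insert.1 hw with rfl | hw
        · exact hqU
        exact (Finset.mem_inter.1 (Finset.mem_inter.1 hw).1).2
      have hScard : S.card = (X ∩ Y).card + 2 := by rw [← hSeq]; exact hinscard
      -- u1 and u2 are not both in S
      have hnot12 : u1 ∉ S ∨ u2 ∉ S := by
        by_contra h
        push_neg at h
        have hvS : v ∈ S := join_two h.1 h.2 hu12 hvu1 hvu2
        exact (hUmem.1 (hSU hvS)) hv
      obtain ⟨u'', hu''U, hu''S⟩ : ∃ w, w ∈ U ∧ w ∉ S := by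
        rcases hnot12 with h | h
        · exact ⟨u1, hu1U, h⟩
        · exact ⟨u2, hu2U, h⟩
      have hslt : S.card < U.card :=
        Finset.card_lt_card (Finset.ssubset_iff_subset_ne.2
          ⟨hSU, fun h => hu''S (h ▸ hu''U)⟩)
      -- union of X and Y is all of W
      have hXYunion : X ∪ Y = W := by
        apply Finset.eq_of_subset_of_card_le (Finset.union_subset hXW hYW)
        have h1 := Finset.card_union_add_card_inter X Y
        omega
      have hfull : ∀ w ∈ U, w ≠ p → w ≠ q → G.Adj p w ∨ G.Adj q w := by
        intro w hwU hwp hwq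
        have hwW : w ∈ W := Finset.mem_erase.2 ⟨hwq, Finset.mem_erase.2 ⟨hwp, hwU⟩⟩
        rw [← hXYunion] at hwW
        rcases Finset.mem_union.1 hwW with h | h
        · exact Or.inl ((SimpleGraph.mem_neighborFinset _ _ _).1 (Finset.mem_inter.1 h).1)
        · exact Or.inr ((SimpleGraph.mem_neighborFinset _ _ _).1 (Finset.mem_inter.1 h).1)
      -- pick a common neighbour c
      obtain ⟨c, hc⟩ : (X ∩ Y).Nonempty := by
        rw [← Finset.card_pos]
        omega
      have hcS : c ∈ S := hCsub hc
      have hcU : c ∈ U := (Finset.mem_inter.1 (Finset.mem_inter.1 hc).1).2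
      have hcp : c ≠ p := fun h => hpnC (h ▸ hc)
      have hcq : c ≠ q := fun h => hqnC (h ▸ hc)
      -- c has no neighbours outside S in U
      have hcout : ∀ w ∈ U, w ∉ S → ¬ G.Adj c w := by
        intro w hwU hwS hadj
        have hwp : w ≠ p := fun h => hwS (h ▸ hpS)
        have hwq : w ≠ q := fun h => hwS (h ▸ hqS)
        have hclosed := nbrs_lt_of_notMem (hSdef ▸ bootClosure_closed ({p,q} : Finset V)) hwS
        rcases hfull w hwU hwp hwq with h | h
        · have hsub2 : ({c, p} : Finset V) ⊆ G.neighborFinset w ∩ S := by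
            intro y hy
            rcases Finset.mem_insert.1 hy with rfl | hy
            · exact Finset.mem_inter.2 ⟨(SimpleGraph.mem_neighborFinset _ _ _).2 hadj.symm, hcS⟩
            rcases Finset.mem_singleton.1 hy with rfl
            exact Finset.mem_inter.2 ⟨(SimpleGraph.mem_neighborFinset _ _ _).2 h.symm, hpS⟩
          have := Finset.card_le_card hsub2
          rw [Finset.card_pair hcp] at this
          omega
        · have hsub2 : ({c, q} : Finset V) ⊆ G.neighborFinset w ∩ S := by
            intro y hy
            rcases Finset.mem_insert.1 hy with rfl | hy
            · exact Finset.mem_inter.2 ⟨(SimpleGraph.mem_neighborFinset _ _ _).2 hadj.symm, hcS⟩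
            rcases Finset.mem_singleton.1 hy with rfl
            exact Finset.mem_inter.2 ⟨(SimpleGraph.mem_neighborFinset _ _ _).2 h.symm, hqS⟩
          have := Finset.card_le_card hsub2
          rw [Finset.card_pair hcq] at this
          omega
      -- degree bound for c
      have hcdeg : (G.neighborFinset c ∩ U).card + 1 ≤ S.card := by
        have hsub2 : G.neighborFinset c ∩ U ⊆ S.erase c := by
          intro w hw
          rcases Finset.mem_inter.1 hw with ⟨hw1, hw2⟩
          have hadj : G.Adj c w := (SimpleGraph.mem_neighborFinset _ _ _).1 hw1
          refine Finset.mem_erase.2 ⟨hadj.ne', ?_⟩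
          by_contra hwS
          exact hcout w hw2 hwS hadj
        have h1 : (G.neighborFinset c ∩ U).card ≤ (S.erase c).card := Finset.card_le_card hsub2
        have h2 : (S.erase c).card = S.card - 1 := Finset.card_erase_of_mem hcS
        have h3 : 1 ≤ S.card := Finset.card_pos.2 ⟨p, hpS⟩
        omega
      -- degree bound for u''
      have hu''deg : (G.neighborFinset u'' ∩ U).card + S.card ≤ U.card := by
        have hTsplit := Finset.card_inter_add_card_sdiff (G.neighborFinset u'' ∩ U) S
        have h1 : (G.neighborFinset u'' ∩ U) ∩ S ⊆ G.neighborFinset u'' ∩ S :=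
          Finset.inter_subset_inter (Finset.inter_subset_left) (le_refl _)
        have h2 : ((G.neighborFinset u'' ∩ U) ∩ S).card ≤ 1 := by
          have hcl := nbrs_lt_of_notMem (hSdef ▸ bootClosure_closed ({p,q} : Finset V)) hu''S
          have := Finset.card_le_card h1
          omega
        have h3 : (G.neighborFinset u'' ∩ U) \ S ⊆ (U \ S).erase u'' := by
          intro w hw
          rcases Finset.mem_sdiff.1 hw with ⟨hw1, hw2⟩
          rcases Finset.mem_inter.1 hw1 with ⟨hwn, hwU⟩
          exact Finset.mem_erase.2 ⟨((SimpleGraph.mem_neighborFinset _ _ _).1 hwn).ne',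
            Finset.mem_sdiff.2 ⟨hwU, hw2⟩⟩
        have h4 : (U \ S).card + S.card = U.card := by
          have := Finset.card_sdiff_of_subset hSU
          have := Finset.card_le_card hSU
          omega
        have h5 : u'' ∈ U \ S := Finset.mem_sdiff.2 ⟨hu''U, hu''S⟩
        have h6 : ((U \ S).erase u'').card = (U \ S).card - 1 := Finset.card_erase_of_mem h5
        have h7 := Finset.card_le_card h3
        have h8 : 1 ≤ (U \ S).card := Finset.card_pos.2 ⟨u'', h5⟩
        omega
      -- Ore between c and u'' finishes
      have hcu'' : ¬ G.Adj c u'' := hcout u'' hu''U hu''S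
      have hOre2 := hdeg c u'' (fun h => hu''S (h ▸ hcS)) hcu''
      have hsc := hsplit c
      have hsu'' := hsplit u''
      have hic : (G.neighborFinset c ∩ I).card ≤ 1 := hUone (hUmem.1 hcU)
      have hiu'' : (G.neighborFinset u'' ∩ I).card ≤ 1 := hUone (hUmem.1 hu''U)
      have hSI : S.card = I.card := le_antisymm hSle (by omega)
      -- deg c ≤ S.card, deg u'' ≤ U.card + 1 - S.card ⇒ |I| ≤ 3
      have hdc : G.degree c ≤ S.card := by omega
      have hdu'' : G.degree u'' + S.card ≤ U.card + 1 := by omega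
      omega
    -- STAGE 2 : endgame with |I| = 3
    have hgen : ∀ p' q' : V, p' ∈ U → q' ∈ U → p' ≠ q' → ¬ G.Adj p' q' →
        (∀ z ∈ I, ¬ (G.Adj z p' ∧ G.Adj z q')) ∧
        (G.neighborFinset p' ∩ I).card = 1 ∧
        (G.neighborFinset q' ∩ I).card = 1 ∧
        ((G.neighborFinset p' ∩ U).card + (G.neighborFinset q' ∩ U).card + 1 ≤ U.card) ∧
        (∀ w ∈ U, w ≠ p' → w ≠ q' → G.Adj p' w ∨ G.Adj q' w) := by
      intro p' q' hpU' hqU' hpq' hnadj'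
      set S := bootClosure G 2 {p', q'} with hSdef
      have hSle : S.card ≤ I.card := hpair p' q' hpq'
      have hpS : p' ∈ S := mem_closure_pair_left p' q'
      have hqS : q' ∈ S := mem_closure_pair_right p' q'
      set X := G.neighborFinset p' ∩ U with hXdef
      set Y := G.neighborFinset q' ∩ U with hYdef
      set W := (U.erase p').erase q' with hWdef
      have hWcard : W.card + 2 = U.card := by
        rw [hWdef, Finset.card_erase_of_mem, Finset.card_erase_of_mem hpU']
        · have : 1 ≤ U.card := le_trans (by norm_num) ht3
          omega
        · exact Finset.mem_erase.2 ⟨hpq'.symm, hqU'⟩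
      have hXW : X ⊆ W := by
        intro w hw
        rcases Finset.mem_inter.1 hw with ⟨hw1, hw2⟩
        have hadj : G.Adj p' w := (SimpleGraph.mem_neighborFinset _ _ _).1 hw1
        refine Finset.mem_erase.2 ⟨?_, Finset.mem_erase.2 ⟨hadj.ne', hw2⟩⟩
        intro h
        exact hnadj' (h ▸ hadj)
      have hYW : Y ⊆ W := by
        intro w hw
        rcases Finset.mem_inter.1 hw with ⟨hw1, hw2⟩
        have hadj : G.Adj q' w := (SimpleGraph.mem_neighborFinset _ _ _).1 hw1
        refine Finset.mem_erase.2 ⟨hadj.ne', Finset.mem_erase.2 ⟨?_, hw2⟩⟩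
        intro h
        exact hnadj' (h ▸ hadj).symm
      have hOre := hdeg p' q' hpq' hnadj'
      have hsp := hsplit p'
      have hsq := hsplit q'
      have hip : (G.neighborFinset p' ∩ I).card ≤ 1 := hUone (hUmem.1 hpU')
      have hiq : (G.neighborFinset q' ∩ I).card ≤ 1 := hUone (hUmem.1 hqU')
      have hinter := card_inter_ge hXW hYW
      have hCmem : ∀ c ∈ X ∩ Y, c ∈ S ∧ c ∈ U ∧ c ≠ p' ∧ c ≠ q' := by
        intro c hc
        rcases Finset.mem_inter.1 hc with ⟨hcX, hcY⟩
        have h1 : G.Adj p' c := (SimpleGraph.mem_neighborFinset _ _ _).1 (Finset.mem_inter.1 hcX).1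
        have h2 : G.Adj q' c := (SimpleGraph.mem_neighborFinset _ _ _).1 (Finset.mem_inter.1 hcY).1
        exact ⟨join_two hpS hqS hpq' h1.symm h2.symm, (Finset.mem_inter.1 hcX).2,
          h1.ne', h2.ne'⟩
      -- at most one common neighbour
      have hCle : (X ∩ Y).card ≤ 1 := by
        by_contra hcle
        push_neg at hcle
        obtain ⟨c₁, hc₁, c₂, hc₂, hc12⟩ := Finset.one_lt_card.1 hcle
        obtain ⟨hc₁S, hc₁U, hc₁p, hc₁q⟩ := hCmem c₁ hc₁
        obtain ⟨hc₂S, hc₂U, hc₂p, hc₂q⟩ := hCmem c₂ hc₂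
        have hins : insert p' (insert q' ({c₁, c₂} : Finset V)) ⊆ S := by
          intro w hw
          rcases Finset.mem_insert.1 hw with rfl | hw
          · exact hpS
          rcases Finset.mem_insert.1 hw with rfl | hw
          · exact hqS
          rcases Finset.mem_insert.1 hw with rfl | hw
          · exact hc₁S
          rcases Finset.mem_singleton.1 hw with rfl
          exact hc₂S
        have hcard4 : (insert p' (insert q' ({c₁, c₂} : Finset V))).card = 4 := by
          rw [Finset.card_insert_of_notMem, Finset.card_insert_of_notMem,
            Finset.card_pair hc12]
          · simp only [Finset.mem_insert, Finset.mem_singleton]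
            push_neg
            exact ⟨hc₁q.symm, hc₂q.symm⟩
          · simp only [Finset.mem_insert, Finset.mem_singleton]
            push_neg
            exact ⟨hpq', hc₁p.symm, hc₂p.symm⟩
        have := Finset.card_le_card hins
        omega
      have hCge : I.card ≤ (X ∩ Y).card + 2 := by
        rw [hXdef, hYdef] at hinter ⊢
        omega
      obtain ⟨c', hc'⟩ : (X ∩ Y).Nonempty := by
        rw [← Finset.card_pos]
        omega
      obtain ⟨hc'S, hc'U, hc'p, hc'q⟩ := hCmem c' hc'
      -- no vertex of I is adjacent to both
      have hnoI : ∀ z ∈ I, ¬ (G.Adj z p' ∧ G.Adj z q') := by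
        intro z hz ⟨h1, h2⟩
        have hzS : z ∈ S := join_two hpS hqS hpq' h1 h2
        have hznU : z ∉ U := fun h => (hUmem.1 h) hz
        have hins : insert z (insert p' (insert q' ({c'} : Finset V))) ⊆ S := by
          intro w hw
          rcases Finset.mem_insert.1 hw with rfl | hw
          · exact hzS
          rcases Finset.mem_insert.1 hw with rfl | hw
          · exact hpS
          rcases Finset.mem_insert.1 hw with rfl | hw
          · exact hqS
          rcases Finset.mem_singleton.1 hw with rfl
          exact hc'S
        have hcard4 : (insert z (insert p' (insert q' ({c'} : Finset V)))).card = 4 := by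
          rw [Finset.card_insert_of_notMem, Finset.card_insert_of_notMem,
            Finset.card_insert_of_notMem, Finset.card_singleton]
          · simp only [Finset.mem_singleton]
            exact fun h => hc'q h.symm
          · simp only [Finset.mem_insert, Finset.mem_singleton]
            push_neg
            exact ⟨hpq', hc'p.symm⟩
          · simp only [Finset.mem_insert, Finset.mem_singleton]
            push_neg
            exact ⟨fun h => hznU (h ▸ hpU'), fun h => hznU (h ▸ hqU'),
              fun h => hznU (h ▸ hc'U)⟩
        have := Finset.card_le_card hins
        omega
      -- the two degree-one facts
      have hXY := Finset.card_union_add_card_inter X Y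
      have hXYW : (X ∪ Y).card ≤ W.card := Finset.card_le_card (Finset.union_subset hXW hYW)
      have hip1 : (G.neighborFinset p' ∩ I).card = 1 := by
        rw [hXdef, hYdef] at hXY hXYW hCle
        omega
      have hiq1 : (G.neighborFinset q' ∩ I).card = 1 := by
        rw [hXdef, hYdef] at hXY hXYW hCle
        omega
      have hdUs : (G.neighborFinset p' ∩ U).card + (G.neighborFinset q' ∩ U).card + 1 ≤ U.card := by
        rw [hXdef, hYdef] at hXY hXYW hCle
        omega
      refine ⟨hnoI, hip1, hiq1, hdUs, ?_⟩
      -- union property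
      have hXYunion : X ∪ Y = W := by
        apply Finset.eq_of_subset_of_card_le (Finset.union_subset hXW hYW)
        rw [hXdef, hYdef] at hXY hCle ⊢
        omega
      intro w hwU hwp hwq
      have hwW : w ∈ W := Finset.mem_erase.2 ⟨hwq, Finset.mem_erase.2 ⟨hwp, hwU⟩⟩
      rw [← hXYunion] at hwW
      rcases Finset.mem_union.1 hwW with h | h
      · exact Or.inl ((SimpleGraph.mem_neighborFinset _ _ _).1 (Finset.mem_inter.1 h).1)
      · exact Or.inr ((SimpleGraph.mem_neighborFinset _ _ _).1 (Finset.mem_inter.1 h).1)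
    -- every vertex of I has at most two neighbours in U
    have hFan : ∀ z ∈ I, (G.neighborFinset z ∩ U).card ≤ 2 := by
      intro z hz
      by_contra hcon2
      push_neg at hcon2
      obtain ⟨a, haF, b, hbF, c, hcF, hab, hac, hbc⟩ := Finset.two_lt_card.1 hcon2
      have hzadj : ∀ w ∈ G.neighborFinset z ∩ U, G.Adj z w ∧ w ∈ U := by
        intro w hw
        exact ⟨(SimpleGraph.mem_neighborFinset _ _ _).1 (Finset.mem_inter.1 hw).1,
          (Finset.mem_inter.1 hw).2⟩
      obtain ⟨hza, haU⟩ := hzadj a haF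
      obtain ⟨hzb, hbU⟩ := hzadj b hbF
      obtain ⟨hzc, hcU2⟩ := hzadj c hcF
      have hpadj : ∀ w₁ w₂ : V, w₁ ∈ U → w₂ ∈ U → w₁ ≠ w₂ → G.Adj z w₁ → G.Adj z w₂ →
          G.Adj w₁ w₂ := by
        intro w₁ w₂ h1 h2 h3 h4 h5
        by_contra h6
        exact (hgen w₁ w₂ h1 h2 h3 h6).1 z hz ⟨h4, h5⟩
      have hadjab : G.Adj a b := hpadj a b haU hbU hab hza hzb
      have hadjac : G.Adj a c := hpadj a c haU hcU2 hac hza hzc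
      have hadjbc : G.Adj b c := hpadj b c hbU hcU2 hbc hzb hzc
      set S := bootClosure G 2 {a, b} with hSdef
      have haS : a ∈ S := mem_closure_pair_left a b
      have hbS : b ∈ S := mem_closure_pair_right a b
      have hzS : z ∈ S := join_two haS hbS hab hza hzb
      have hcS : c ∈ S := join_two haS hbS hab hadjac.symm hadjbc.symm
      have hins : insert z (insert c ({a, b} : Finset V)) ⊆ S := by
        intro w hw
        rcases Finset.mem_insert.1 hw with rfl | hw
        · exact hzS
        rcases Finset.mem_insert.1 hw with rfl | hw
        · exact hcS
        rcases Finset.mem_insert.1 hw with rfl | hw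
        · exact haS
        rcases Finset.mem_singleton.1 hw with rfl
        exact hbS
      have hznU : z ∉ U := fun h => (hUmem.1 h) hz
      have hcard4 : (insert z (insert c ({a, b} : Finset V))).card = 4 := by
        rw [Finset.card_insert_of_notMem, Finset.card_insert_of_notMem,
          Finset.card_pair hab]
        · simp only [Finset.mem_insert, Finset.mem_singleton]
          push_neg
          exact ⟨fun h => hac h.symm, fun h => hbc h.symm⟩
        · simp only [Finset.mem_insert, Finset.mem_singleton]
          push_neg
          exact ⟨fun h => hznU (h ▸ hcU2), fun h => hznU (h ▸ haU), fun h => hznU (h ▸ hbU)⟩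
      have h4 := Finset.card_le_card hins
      have h5 : S.card ≤ I.card := hpair a b hab
      omega
    -- owners of p and q
    obtain ⟨a, haeq⟩ := Finset.card_eq_one.1 (hgen p q hpU hqU hpq hnadj).2.1
    obtain ⟨b, hbeq⟩ := Finset.card_eq_one.1 (hgen p q hpU hqU hpq hnadj).2.2.1
    have haI : a ∈ I := (Finset.mem_inter.1 (haeq ▸ Finset.mem_singleton_self a)).2
    have hpa : G.Adj p a := (SimpleGraph.mem_neighborFinset _ _ _).1
      (Finset.mem_inter.1 (haeq ▸ Finset.mem_singleton_self a)).1
    have hbI : b ∈ I := (Finset.mem_inter.1 (hbeq ▸ Finset.mem_singleton_self b)).2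
    have hqb : G.Adj q b := (SimpleGraph.mem_neighborFinset _ _ _).1
      (Finset.mem_inter.1 (hbeq ▸ Finset.mem_singleton_self b)).1
    have hab : a ≠ b := by
      intro h
      exact (hgen p q hpU hqU hpq hnadj).1 a haI ⟨hpa.symm, h ▸ hqb.symm⟩
    -- third vertex of I
    have habsub : ({a, b} : Finset V) ⊆ I := by
      intro w hw
      rcases Finset.mem_insert.1 hw with rfl | hw
      · exact haI
      rcases Finset.mem_singleton.1 hw with rfl
      exact hbI
    obtain ⟨cI, hcImem⟩ : (I \ ({a, b} : Finset V)).Nonempty := by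
      rw [← Finset.card_pos, Finset.card_sdiff_of_subset habsub, Finset.card_pair hab]
      omega
    have hcI : cI ∈ I := (Finset.mem_sdiff.1 hcImem).1
    have hcIa : cI ≠ a := by
      have := (Finset.mem_sdiff.1 hcImem).2
      simp only [Finset.mem_insert, Finset.mem_singleton] at this
      push_neg at this
      exact this.1
    have hcIb : cI ≠ b := by
      have := (Finset.mem_sdiff.1 hcImem).2
      simp only [Finset.mem_insert, Finset.mem_singleton] at this
      push_neg at this
      exact this.2
    have hIeq : ({a, b, cI} : Finset V) = I := by
      apply Finset.eq_of_subset_of_card_le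
      · intro w hw
        rcases Finset.mem_insert.1 hw with rfl | hw
        · exact haI
        rcases Finset.mem_insert.1 hw with rfl | hw
        · exact hbI
        rcases Finset.mem_singleton.1 hw with rfl
        exact hcI
      · rw [Finset.card_insert_of_notMem, Finset.card_insert_of_notMem,
          Finset.card_singleton]
        · omega
        · simp only [Finset.mem_singleton]
          exact fun h => hcIb h.symm
        · simp only [Finset.mem_insert, Finset.mem_singleton]
          push_neg
          exact ⟨hab, fun h => hcIa h.symm⟩
    -- non-neighbourhoods
    set np := U \ insert p (G.neighborFinset p ∩ U) with hnpdef
    set nq := U \ insert q (G.neighborFinset q ∩ U) with hnqdef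
    have hnpcard : np.card + ((G.neighborFinset p ∩ U).card + 1) = U.card := by
      rw [hnpdef, Finset.card_sdiff_of_subset, Finset.card_insert_of_notMem]
      · have h1 : (G.neighborFinset p ∩ U).card + 1 ≤ U.card := by
          have hsub2 : insert p (G.neighborFinset p ∩ U) ⊆ U := by
            intro w hw
            rcases Finset.mem_insert.1 hw with rfl | hw
            · exact hpU
            exact (Finset.mem_inter.1 hw).2
          have := Finset.card_le_card hsub2
          rw [Finset.card_insert_of_notMem] at this
          · exact this
          · intro h
            exact (SimpleGraph.irrefl G) ((SimpleGraph.mem_neighborFinset _ _ _).1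
              (Finset.mem_inter.1 h).1)
        omega
      · intro h
        exact (SimpleGraph.irrefl G) ((SimpleGraph.mem_neighborFinset _ _ _).1
          (Finset.mem_inter.1 h).1)
      · intro w hw
        rcases Finset.mem_insert.1 hw with rfl | hw
        · exact hpU
        exact (Finset.mem_inter.1 hw).2
    have hnqcard : nq.card + ((G.neighborFinset q ∩ U).card + 1) = U.card := by
      rw [hnqdef, Finset.card_sdiff_of_subset, Finset.card_insert_of_notMem]
      · have h1 : (G.neighborFinset q ∩ U).card + 1 ≤ U.card := by
          have hsub2 : insert q (G.neighborFinset q ∩ U) ⊆ U := by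
            intro w hw
            rcases Finset.mem_insert.1 hw with rfl | hw
            · exact hqU
            exact (Finset.mem_inter.1 hw).2
          have := Finset.card_le_card hsub2
          rw [Finset.card_insert_of_notMem] at this
          · exact this
          · intro h
            exact (SimpleGraph.irrefl G) ((SimpleGraph.mem_neighborFinset _ _ _).1
              (Finset.mem_inter.1 h).1)
        omega
      · intro h
        exact (SimpleGraph.irrefl G) ((SimpleGraph.mem_neighborFinset _ _ _).1
          (Finset.mem_inter.1 h).1)
      · intro w hw
        rcases Finset.mem_insert.1 hw with rfl | hw
        · exact hqU
        exact (Finset.mem_inter.1 hw).2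
    have hnp_mem : ∀ w ∈ np, w ∈ U ∧ w ≠ p ∧ ¬ G.Adj p w := by
      intro w hw
      rcases Finset.mem_sdiff.1 hw with ⟨hw1, hw2⟩
      simp only [Finset.mem_insert, Finset.mem_inter, SimpleGraph.mem_neighborFinset] at hw2
      push_neg at hw2
      exact ⟨hw1, fun h => hw2.1 h, fun h => hw2.2 h hw1⟩
    have hnq_mem : ∀ w ∈ nq, w ∈ U ∧ w ≠ q ∧ ¬ G.Adj q w := by
      intro w hw
      rcases Finset.mem_sdiff.1 hw with ⟨hw1, hw2⟩
      simp only [Finset.mem_insert, Finset.mem_inter, SimpleGraph.mem_neighborFinset] at hw2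
      push_neg at hw2
      exact ⟨hw1, fun h => hw2.1 h, fun h => hw2.2 h hw1⟩
    have hnp_sub : np ⊆ (G.neighborFinset b ∩ U) ∪ (G.neighborFinset cI ∩ U) := by
      intro w hw
      obtain ⟨hwU, hwp, hwnadj⟩ := hnp_mem w hw
      obtain ⟨zw, hzweq⟩ := Finset.card_eq_one.1 (hgen p w hpU hwU (fun h => hwp h.symm) hwnadj).2.2.1
      have hzwI : zw ∈ I := (Finset.mem_inter.1 (hzweq ▸ Finset.mem_singleton_self zw)).2
      have hwzw : G.Adj w zw := (SimpleGraph.mem_neighborFinset _ _ _).1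
        (Finset.mem_inter.1 (hzweq ▸ Finset.mem_singleton_self zw)).1
      have hzwa : zw ≠ a := by
        intro h
        exact (hgen p w hpU hwU (fun h' => hwp h'.symm) hwnadj).1 a haI ⟨hpa.symm, h ▸ hwzw.symm⟩
      have : zw ∈ ({a, b, cI} : Finset V) := hIeq ▸ hzwI
      simp only [Finset.mem_insert, Finset.mem_singleton] at this
      rcases this with rfl | rfl | rfl
      · exact absurd rfl hzwa
      · exact Finset.mem_union.2 (Or.inl (Finset.mem_inter.2
          ⟨(SimpleGraph.mem_neighborFinset _ _ _).2 hwzw.symm, hwU⟩))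
      · exact Finset.mem_union.2 (Or.inr (Finset.mem_inter.2
          ⟨(SimpleGraph.mem_neighborFinset _ _ _).2 hwzw.symm, hwU⟩))
    have hnq_sub : nq ⊆ (G.neighborFinset a ∩ U) ∪ (G.neighborFinset cI ∩ U) := by
      intro w hw
      obtain ⟨hwU, hwq, hwnadj⟩ := hnq_mem w hw
      obtain ⟨zw, hzweq⟩ := Finset.card_eq_one.1 (hgen q w hqU hwU (fun h => hwq h.symm) hwnadj).2.2.1
      have hzwI : zw ∈ I := (Finset.mem_inter.1 (hzweq ▸ Finset.mem_singleton_self zw)).2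
      have hwzw : G.Adj w zw := (SimpleGraph.mem_neighborFinset _ _ _).1
        (Finset.mem_inter.1 (hzweq ▸ Finset.mem_singleton_self zw)).1
      have hzwb : zw ≠ b := by
        intro h
        exact (hgen q w hqU hwU (fun h' => hwq h'.symm) hwnadj).1 b hbI ⟨hqb.symm, h ▸ hwzw.symm⟩
      have : zw ∈ ({a, b, cI} : Finset V) := hIeq ▸ hzwI
      simp only [Finset.mem_insert, Finset.mem_singleton] at this
      rcases this with rfl | rfl | rfl
      · exact Finset.mem_union.2 (Or.inl (Finset.mem_inter.2
          ⟨(SimpleGraph.mem_neighborFinset _ _ _).2 hwzw.symm, hwU⟩))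
      · exact absurd rfl hzwb
      · exact Finset.mem_union.2 (Or.inr (Finset.mem_inter.2
          ⟨(SimpleGraph.mem_neighborFinset _ _ _).2 hwzw.symm, hwU⟩))
    -- cardinalities
    have hFb : (G.neighborFinset b ∩ U).card ≤ 2 := hFan b hbI
    have hFa : (G.neighborFinset a ∩ U).card ≤ 2 := hFan a haI
    have hFc : (G.neighborFinset cI ∩ U).card ≤ 2 := hFan cI hcI
    have hub_p : ((G.neighborFinset b ∩ U) ∪ (G.neighborFinset cI ∩ U)).card ≤ 4 := by
      have := Finset.card_union_le (G.neighborFinset b ∩ U) (G.neighborFinset cI ∩ U)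
      omega
    have hub_q : ((G.neighborFinset a ∩ U) ∪ (G.neighborFinset cI ∩ U)).card ≤ 4 := by
      have := Finset.card_union_le (G.neighborFinset a ∩ U) (G.neighborFinset cI ∩ U)
      omega
    have hnp4 : np.card ≤ 4 := le_trans (Finset.card_le_card hnp_sub) hub_p
    have hnq4 : nq.card ≤ 4 := le_trans (Finset.card_le_card hnq_sub) hub_q
    -- Ore gives the lower bound
    have hOrepq := hdeg p q hpq hnadj
    have hspp := hsplit p
    have hsqq := hsplit q
    have hdU4 := (hgen p q hpU hqU hpq hnadj).2.2.2.1
    have hip1 := (hgen p q hpU hqU hpq hnadj).2.1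
    have hiq1 := (hgen p q hpU hqU hpq hnadj).2.2.1
    -- t = 9 and np.card = 4
    have ht9 : U.card = 9 := by omega
    have hnpc4 : np.card = 4 := by omega
    have hnp_eq : np = (G.neighborFinset b ∩ U) ∪ (G.neighborFinset cI ∩ U) := by
      apply Finset.eq_of_subset_of_card_le hnp_sub
      omega
    have hnqc4 : nq.card = 4 := by omega
    have hnq_eq : nq = (G.neighborFinset a ∩ U) ∪ (G.neighborFinset cI ∩ U) := by
      apply Finset.eq_of_subset_of_card_le hnq_sub
      omega
    -- pick r in the fan of cI
    obtain ⟨r, hr⟩ : (G.neighborFinset cI ∩ U).Nonempty := by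
      rw [← Finset.card_pos]
      by_contra hrc
      push_neg at hrc
      have h0 : (G.neighborFinset cI ∩ U).card = 0 := by omega
      have h1 : np.card ≤ (G.neighborFinset b ∩ U).card + (G.neighborFinset cI ∩ U).card := by
        rw [hnp_eq]
        exact Finset.card_union_le _ _
      omega
    have hrnp : r ∈ np := by
      rw [hnp_eq]
      exact Finset.mem_union.2 (Or.inr hr)
    have hrnq : r ∈ nq := by
      rw [hnq_eq]
      exact Finset.mem_union.2 (Or.inr hr)
    obtain ⟨hrU, hrp, hrnadjp⟩ := hnp_mem r hrnp
    obtain ⟨_, hrq, hrnadjq⟩ := hnq_mem r hrnq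
    rcases (hgen p q hpU hqU hpq hnadj).2.2.2.2 r hrU hrp hrq with h | h
    · exact hrnadjp h
    · exact hrnadjq h
  -- from U clique : |I| ≥ |U| + 2
  have hJfull : ∀ w' : V, w' ∈ I → G.Adj v w' →
      insert w' (insert v U) ⊆ bootClosure G 2 {u1, w'} := by
    intro w' hw'I hvw'
    have hu1w' : u1 ≠ w' := fun h => hu1nI (h ▸ hw'I)
    have hu1S : u1 ∈ bootClosure G 2 {u1, w'} := mem_closure_pair_left _ _
    have hw'S : w' ∈ bootClosure G 2 {u1, w'} := mem_closure_pair_right _ _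
    have hvS : v ∈ bootClosure G 2 {u1, w'} := join_two hu1S hw'S hu1w' hvu1 hvw'
    have hvu1ne : u1 ≠ v := fun h => hu1nI (h ▸ hv)
    have hu2S : u2 ∈ bootClosure G 2 {u1, w'} :=
      join_two hu1S hvS hvu1ne (hUclique u2 hu2U u1 hu1U hu12.symm) hvu2.symm
    have hallU : ∀ u ∈ U, u ∈ bootClosure G 2 {u1, w'} := by
      intro u huU
      by_cases h1 : u = u1
      · exact h1 ▸ hu1S
      by_cases h2 : u = u2
      · exact h2 ▸ hu2S
      exact join_two hu1S hu2S hu12 (hUclique u huU u1 hu1U h1) (hUclique u huU u2 hu2U h2)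
    intro w hw
    rcases Finset.mem_insert.1 hw with rfl | hw
    · exact hw'S
    rcases Finset.mem_insert.1 hw with rfl | hw
    · exact hvS
    exact hallU w hw
  have hs2t : U.card + 2 ≤ I.card := by
    -- first, |I| ≥ |U| + 1
    have hJ := hpair u1 u2 hu12
    have hu1S : u1 ∈ bootClosure G 2 {u1, u2} := mem_closure_pair_left _ _
    have hu2S : u2 ∈ bootClosure G 2 {u1, u2} := mem_closure_pair_right _ _
    have hvS : v ∈ bootClosure G 2 {u1, u2} := join_two hu1S hu2S hu12 hvu1 hvu2
    have hsubJ : insert v U ⊆ bootClosure G 2 {u1, u2} := by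
      intro w hw
      rcases Finset.mem_insert.1 hw with rfl | hw
      · exact hvS
      by_cases h1 : w = u1
      · exact h1 ▸ hu1S
      by_cases h2 : w = u2
      · exact h2 ▸ hu2S
      exact join_two hu1S hu2S hu12 (hUclique w hw u1 hu1U h1) (hUclique w hw u2 hu2U h2)
    have hvnU : v ∉ U := fun h => (hUmem.1 h) hv
    have hcardJ : (insert v U).card = U.card + 1 := Finset.card_insert_of_notMem hvnU
    have ht1 : U.card + 1 ≤ I.card := by
      have := Finset.card_le_card hsubJ
      omega
    -- now rule out |I| = |U| + 1
    by_contra hcontra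
    push_neg at hcontra
    have hseq : I.card = U.card + 1 := by omega
    -- dI v ≥ 1
    obtain ⟨w', hw'⟩ : (G.neighborFinset v ∩ I).Nonempty := by
      by_contra hempty
      rw [Finset.not_nonempty_iff_eq_empty] at hempty
      have hdegv : G.degree v = (G.neighborFinset v ∩ U).card := by
        have := hsplit v
        rw [hempty] at this
        simpa using this
      -- v is adjacent to all of U except ux
      have hvUsub : G.neighborFinset v ∩ U ⊆ U.erase ux := by
        intro w hw
        rcases Finset.mem_inter.1 hw with ⟨h1, h2⟩
        refine Finset.mem_erase.2 ⟨?_, h2⟩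
        intro h
        exact hvux (h ▸ (SimpleGraph.mem_neighborFinset _ _ _).1 h1)
      have hvUle : (G.neighborFinset v ∩ U).card + 1 ≤ U.card := by
        have h1 := Finset.card_le_card hvUsub
        have h2 : (U.erase ux).card = U.card - 1 := Finset.card_erase_of_mem huxU
        omega
      have hOre1 := hdeg v ux (fun h => huxnI (h ▸ hv)) hvux
      have hxdeg := hsplit ux
      have hxi : (G.neighborFinset ux ∩ I).card ≤ 1 := hUone huxnI
      have hxU : (G.neighborFinset ux ∩ U).card + 1 ≤ U.card := by
        have hsub2 : G.neighborFinset ux ∩ U ⊆ U.erase ux := by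
          intro w hw
          rcases Finset.mem_inter.1 hw with ⟨h1, h2⟩
          exact Finset.mem_erase.2 ⟨((SimpleGraph.mem_neighborFinset _ _ _).1 h1).ne', h2⟩
        have h1 := Finset.card_le_card hsub2
        have h2 : (U.erase ux).card = U.card - 1 := Finset.card_erase_of_mem huxU
        omega
      -- degree of v is exactly |U| - 1
      have hvdeg : U.card ≤ G.degree v + 1 := by omega
      -- every other vertex of I has a neighbour in U
      have hzU : ∀ z ∈ I.erase v, 1 ≤ (G.neighborFinset z ∩ U).card := by
        intro z hz
        rcases Finset.mem_erase.1 hz with ⟨hzv, hzI⟩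
        have hnadjzv : ¬ G.Adj z v := by
          intro h
          have : z ∈ G.neighborFinset v ∩ I :=
            Finset.mem_inter.2 ⟨(SimpleGraph.mem_neighborFinset _ _ _).2 h.symm, hzI⟩
          rw [hempty] at this
          simp at this
        have hOre2 := hdeg z v hzv hnadjzv
        have hsz := hsplit z
        have hdIz : (G.neighborFinset z ∩ I).card + 2 ≤ I.card := by
          have hsub2 : G.neighborFinset z ∩ I ⊆ (I.erase z).erase v := by
            intro w hw
            rcases Finset.mem_inter.1 hw with ⟨h1, h2⟩
            refine Finset.mem_erase.2 ⟨?_, Finset.mem_erase.2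
              ⟨((SimpleGraph.mem_neighborFinset _ _ _).1 h1).ne', h2⟩⟩
            intro h
            exact hnadjzv (h ▸ (SimpleGraph.mem_neighborFinset _ _ _).1 h1)
          have h1 := Finset.card_le_card hsub2
          have h2 : (I.erase z).card = I.card - 1 := Finset.card_erase_of_mem hzI
          have h3 : v ∈ I.erase z := Finset.mem_erase.2 ⟨fun h => hzv h.symm, hv⟩
          have h4 : ((I.erase z).erase v).card = (I.erase z).card - 1 :=
            Finset.card_erase_of_mem h3
          have h5 : 1 ≤ (I.erase z).card := Finset.card_pos.2 ⟨v, h3⟩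
          omega
        omega
      -- sum up
      have hsum1 : (G.neighborFinset v ∩ U).card +
          ∑ z ∈ I.erase v, (G.neighborFinset z ∩ U).card
          = ∑ z ∈ I, (G.neighborFinset z ∩ U).card :=
        Finset.add_sum_erase I (fun z => (G.neighborFinset z ∩ U).card) hv
      have hsum2 : (I.erase v).card * 1 ≤ ∑ z ∈ I.erase v, (G.neighborFinset z ∩ U).card := by
        simpa [smul_eq_mul] using Finset.card_nsmul_le_sum (I.erase v) _ 1 hzU
      have hIve : (I.erase v).card = I.card - 1 := Finset.card_erase_of_mem hv
      have hs1 : 1 ≤ I.card := Finset.card_pos.2 ⟨v, hv⟩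
      omega
    -- now use w' to overflow
    rcases Finset.mem_inter.1 hw' with ⟨hw'n, hw'I⟩
    have hvw' : G.Adj v w' := (SimpleGraph.mem_neighborFinset _ _ _).1 hw'n
    have hsub3 := hJfull w' hw'I hvw'
    have hw'nU : w' ∉ U := fun h => (hUmem.1 h) hw'I
    have hvnU : v ∉ U := fun h => (hUmem.1 h) hv
    have hw'v : w' ≠ v := hvw'.ne'
    have hcard3 : (insert w' (insert v U)).card = U.card + 2 := by
      rw [Finset.card_insert_of_notMem, Finset.card_insert_of_notMem hvnU]
      simp only [Finset.mem_insert]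
      push_neg
      exact ⟨hw'v, hw'nU⟩
    have h4 := Finset.card_le_card hsub3
    have h5 := hpair u1 w' (fun h => hu1nI (h ▸ hw'I))
    omega
  -- THE CASCADE LEMMA
  have hcl2 : ∀ a b z : V, a ≠ b → z ∈ I → z ≠ v → z ≠ x →
      1 ≤ (G.neighborFinset z ∩ U).card → z ∈ bootClosure G 2 {a, b} →
      3 ≤ (I ∩ bootClosure G 2 {a, b}).card → I ⊆ bootClosure G 2 {a, b} := by
    intro a b z hab hzI hzv hzx hzU hzS h3S
    set S := bootClosure G 2 {a, b} with hSdef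
    by_contra hno
    have hRne : (I \ S).Nonempty := Finset.sdiff_nonempty.2 hno
    set R := I \ S with hRdef
    have hsplitIR : (I ∩ S).card + R.card = I.card := Finset.card_inter_add_card_sdiff I S
    have hr1 : 1 ≤ R.card := Finset.card_pos.2 hRne
    have hr3 : R.card + 3 ≤ I.card := by omega
    set aa := I.card - R.card - 2 with haadef
    have haa : R.card + aa + 2 = I.card := by omega
    have haa1 : 1 ≤ aa := by omega
    -- pointwise lower bound on U-degrees inside R
    have hRbound : ∀ y ∈ R, aa ≤ (G.neighborFinset y ∩ U).card := by
      intro y hy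
      rcases Finset.mem_sdiff.1 hy with ⟨hyI, hyS⟩
      have hd := hdegI y hyI
      have hs := hsplit y
      have hcl := nbrs_lt_of_notMem (hSdef ▸ bootClosure_closed ({a, b} : Finset V)) hyS
      have hsub : G.neighborFinset y ∩ I ⊆ (G.neighborFinset y ∩ S) ∪ (R.erase y) := by
        intro w hw
        rcases Finset.mem_inter.1 hw with ⟨hw1, hw2⟩
        by_cases hwS : w ∈ S
        · exact Finset.mem_union.2 (Or.inl (Finset.mem_inter.2 ⟨hw1, hwS⟩))
        · refine Finset.mem_union.2 (Or.inr (Finset.mem_erase.2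
            ⟨((SimpleGraph.mem_neighborFinset _ _ _).1 hw1).ne', ?_⟩))
          exact Finset.mem_sdiff.2 ⟨hw2, hwS⟩
      have h1 := Finset.card_le_card hsub
      have h2 := Finset.card_union_le (G.neighborFinset y ∩ S) (R.erase y)
      have h3 : (R.erase y).card = R.card - 1 := Finset.card_erase_of_mem hy
      omega
    have hsumR : R.card * aa ≤ ∑ y ∈ R, (G.neighborFinset y ∩ U).card := by
      simpa [smul_eq_mul] using
        Finset.card_nsmul_le_sum R (fun y => (G.neighborFinset y ∩ U).card) aa hRbound
    have hIS : (I ∩ S) ⊆ I := Finset.inter_subset_left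
    have hsumsplit : ∑ y ∈ R, (G.neighborFinset y ∩ U).card
        + ∑ y ∈ I ∩ S, (G.neighborFinset y ∩ U).card
        = ∑ y ∈ I, (G.neighborFinset y ∩ U).card := by
      have h := Finset.sum_sdiff (f := fun y => (G.neighborFinset y ∩ U).card) hIS
      rwa [Finset.sdiff_inter_self_left] at h
    have hzIS : z ∈ I ∩ S := Finset.mem_inter.2 ⟨hzI, hzS⟩
    have hx1c : 1 ≤ (G.neighborFinset x ∩ U).card := Finset.card_pos.2 ⟨ux, huxmem⟩
    have hprod := nat_prod_ge hr1 haa1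
    by_cases hvS : v ∈ S
    · by_cases hxS : x ∈ S
      · -- v and x both inside S
        have hsub3 : ({z, v, x} : Finset V) ⊆ I ∩ S := by
          intro w hw
          rcases Finset.mem_insert.1 hw with rfl | hw
          · exact hzIS
          rcases Finset.mem_insert.1 hw with rfl | hw
          · exact Finset.mem_inter.2 ⟨hv, hvS⟩
          rcases Finset.mem_singleton.1 hw with rfl
          exact Finset.mem_inter.2 ⟨hx, hxS⟩
        have hsum3 : ∑ y ∈ ({z, v, x} : Finset V), (G.neighborFinset y ∩ U).card
            = (G.neighborFinset z ∩ U).card + ((G.neighborFinset v ∩ U).card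
              + (G.neighborFinset x ∩ U).card) := by
          rw [Finset.sum_insert, Finset.sum_insert, Finset.sum_singleton]
          · simp only [Finset.mem_singleton]
            exact fun h => hxv (h.symm)
          · simp only [Finset.mem_insert, Finset.mem_singleton]
            push_neg
            exact ⟨hzv, hzx⟩
        have hQ : ∑ y ∈ ({z, v, x} : Finset V), (G.neighborFinset y ∩ U).card
            ≤ ∑ y ∈ I ∩ S, (G.neighborFinset y ∩ U).card :=
          Finset.sum_le_sum_of_subset hsub3
        rw [hsum3] at hQ
        omega
      · -- x outside S
        have hsub2 : ({z, v} : Finset V) ⊆ I ∩ S := by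
          intro w hw
          rcases Finset.mem_insert.1 hw with rfl | hw
          · exact hzIS
          rcases Finset.mem_singleton.1 hw with rfl
          exact Finset.mem_inter.2 ⟨hv, hvS⟩
        have hsum2 : ∑ y ∈ ({z, v} : Finset V), (G.neighborFinset y ∩ U).card
            = (G.neighborFinset z ∩ U).card + (G.neighborFinset v ∩ U).card := by
          rw [Finset.sum_insert, Finset.sum_singleton]
          simp only [Finset.mem_singleton]
          exact hzv
        have hQ : ∑ y ∈ ({z, v} : Finset V), (G.neighborFinset y ∩ U).card
            ≤ ∑ y ∈ I ∩ S, (G.neighborFinset y ∩ U).card :=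
          Finset.sum_le_sum_of_subset hsub2
        rw [hsum2] at hQ
        omega
    · -- v ∈ R
      have hvR : v ∈ R := Finset.mem_sdiff.2 ⟨hv, hvS⟩
      have hsplitv : (G.neighborFinset v ∩ U).card
          + ∑ y ∈ R.erase v, (G.neighborFinset y ∩ U).card
          = ∑ y ∈ R, (G.neighborFinset y ∩ U).card :=
        Finset.add_sum_erase R (fun y => (G.neighborFinset y ∩ U).card) hvR
      have hsumR2 : (R.erase v).card * aa
          ≤ ∑ y ∈ R.erase v, (G.neighborFinset y ∩ U).card := by
        simpa [smul_eq_mul] using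
          Finset.card_nsmul_le_sum (R.erase v) (fun y => (G.neighborFinset y ∩ U).card) aa
            (fun y hy => hRbound y (Finset.mem_of_mem_erase hy))
      have hrerase : (R.erase v).card = R.card - 1 := Finset.card_erase_of_mem hvR
      have hj1 : (R.erase v).card * aa = (R.card - 1) * aa := by rw [hrerase]
      have hvaa : aa ≤ (G.neighborFinset v ∩ U).card := hRbound v hvR
      have hexp : (R.card - 1) * aa + aa = R.card * aa := by
        have h1 : (R.card - 1) * aa = R.card * aa - 1 * aa := by
          rw [← Nat.sub_mul]
        have h2 : aa ≤ R.card * aa := le_trans (by omega) (Nat.mul_le_mul_right aa hr1)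
        omega
      have hsumz : ∑ y ∈ ({z} : Finset V), (G.neighborFinset y ∩ U).card
          = (G.neighborFinset z ∩ U).card := Finset.sum_singleton _ _
      have hQz : ∑ y ∈ ({z} : Finset V), (G.neighborFinset y ∩ U).card
          ≤ ∑ y ∈ I ∩ S, (G.neighborFinset y ∩ U).card :=
        Finset.sum_le_sum_of_subset
          (by intro w hw; rcases Finset.mem_singleton.1 hw with rfl; exact hzIS)
      rw [hsumz] at hQz
      by_cases hxS : x ∈ S
      · -- x inside S : Q ≥ dU z + dU x
        have hsub2 : ({z, x} : Finset V) ⊆ I ∩ S := by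
          intro w hw
          rcases Finset.mem_insert.1 hw with rfl | hw
          · exact hzIS
          rcases Finset.mem_singleton.1 hw with rfl
          exact Finset.mem_inter.2 ⟨hx, hxS⟩
        have hsum2 : ∑ y ∈ ({z, x} : Finset V), (G.neighborFinset y ∩ U).card
            = (G.neighborFinset z ∩ U).card + (G.neighborFinset x ∩ U).card := by
          rw [Finset.sum_insert, Finset.sum_singleton]
          simp only [Finset.mem_singleton]
          exact hzx
        have hQ : ∑ y ∈ ({z, x} : Finset V), (G.neighborFinset y ∩ U).card
            ≤ ∑ y ∈ I ∩ S, (G.neighborFinset y ∩ U).card :=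
          Finset.sum_le_sum_of_subset hsub2
        rw [hsum2] at hQ
        omega
      · -- x ∈ R as well
        have hxR : x ∈ R := Finset.mem_sdiff.2 ⟨hx, hxS⟩
        have hxRe : x ∈ R.erase v := Finset.mem_erase.2 ⟨hxv, hxR⟩
        have hsplitx : (G.neighborFinset x ∩ U).card
            + ∑ y ∈ (R.erase v).erase x, (G.neighborFinset y ∩ U).card
            = ∑ y ∈ R.erase v, (G.neighborFinset y ∩ U).card :=
          Finset.add_sum_erase (R.erase v) (fun y => (G.neighborFinset y ∩ U).card) hxRe
        have hsumR3 : ((R.erase v).erase x).card * aa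
            ≤ ∑ y ∈ (R.erase v).erase x, (G.neighborFinset y ∩ U).card := by
          simpa [smul_eq_mul] using
            Finset.card_nsmul_le_sum ((R.erase v).erase x)
              (fun y => (G.neighborFinset y ∩ U).card) aa
              (fun y hy => hRbound y (Finset.mem_of_mem_erase (Finset.mem_of_mem_erase hy)))
        have hrerase2 : ((R.erase v).erase x).card = (R.erase v).card - 1 :=
          Finset.card_erase_of_mem hxRe
        have hj2 : ((R.erase v).erase x).card * aa = (R.card - 2) * aa := by
          rw [hrerase2, hrerase, Nat.sub_sub]
        have hexp2 : (R.card - 2) * aa + aa = (R.card - 1) * aa := by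
          have h1 : (R.card - 2) * aa = (R.card - 1) * aa - 1 * aa := by
            rw [← Nat.sub_mul]
            congr 1
          have h2 : 1 ≤ (R.erase v).card := Finset.card_pos.2 ⟨x, hxRe⟩
          have h3 : aa ≤ (R.card - 1) * aa := by
            calc aa = 1 * aa := (one_mul aa).symm
              _ ≤ (R.card - 1) * aa := Nat.mul_le_mul_right aa (by omega)
          omega
        have hr2 : 2 ≤ R.card := by
          have h1 : 1 ≤ (R.erase v).card := Finset.card_pos.2 ⟨x, hxRe⟩
          omega
        have hxaa : aa ≤ (G.neighborFinset x ∩ U).card := hRbound x hxR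
        by_cases haa2 : 2 ≤ aa
        · have hprod2 := nat_prod_ge2 hr2 haa2
          omega
        · -- aa = 1
          have haa1' : aa = 1 := by omega
          have hmul3 : ((R.erase v).erase x).card * aa = ((R.erase v).erase x).card := by
            rw [haa1', mul_one]
          omega
  -- BULLET 2 : only v and x have neighbours in U
  have hbul2 : ∀ z ∈ I, z ≠ v → z ≠ x → (G.neighborFinset z ∩ U).card = 0 := by
    intro z hzI hzv hzx
    by_contra hcon
    have hzU : 1 ≤ (G.neighborFinset z ∩ U).card := by omega
    obtain ⟨uz, huz⟩ := Finset.card_pos.1 hzU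
    have huzU : uz ∈ U := (Finset.mem_inter.1 huz).2
    have hzuz : G.Adj z uz := (SimpleGraph.mem_neighborFinset _ _ _).1 (Finset.mem_inter.1 huz).1
    have hx1c : 1 ≤ (G.neighborFinset x ∩ U).card := Finset.card_pos.2 ⟨ux, huxmem⟩
    -- the U-degree of z is at most |U| - 3
    have hsumvxz : (G.neighborFinset v ∩ U).card + ((G.neighborFinset x ∩ U).card
        + (G.neighborFinset z ∩ U).card) ≤ U.card := by
      have hsub : ({v, x, z} : Finset V) ⊆ I := by
        intro w hw
        rcases Finset.mem_insert.1 hw with rfl | hw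
        · exact hv
        rcases Finset.mem_insert.1 hw with rfl | hw
        · exact hx
        rcases Finset.mem_singleton.1 hw with rfl
        exact hzI
      have hQ : ∑ y ∈ ({v, x, z} : Finset V), (G.neighborFinset y ∩ U).card
          ≤ ∑ y ∈ I, (G.neighborFinset y ∩ U).card := Finset.sum_le_sum_of_subset hsub
      have hsum3 : ∑ y ∈ ({v, x, z} : Finset V), (G.neighborFinset y ∩ U).card
          = (G.neighborFinset v ∩ U).card + ((G.neighborFinset x ∩ U).card
            + (G.neighborFinset z ∩ U).card) := by
        rw [Finset.sum_insert, Finset.sum_insert, Finset.sum_singleton]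
        · simp only [Finset.mem_singleton]
          exact fun h => hzx h.symm
        · simp only [Finset.mem_insert, Finset.mem_singleton]
          push_neg
          exact ⟨fun h => hxv h.symm, fun h => hzv h.symm⟩
      rw [hsum3] at hQ
      omega
    -- find an I-neighbour w of z away from v and x
    have hdIz3 : 3 ≤ (G.neighborFinset z ∩ I).card := by
      have h1 := hdegI z hzI
      have h2 := hsplit z
      omega
    obtain ⟨w, hw⟩ : ((G.neighborFinset z ∩ I) \ ({v, x} : Finset V)).Nonempty := by
      rw [← Finset.card_pos]
      have h1 := Finset.card_sdiff_add_card_eq_card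
        (Finset.inter_subset_inter (le_refl (G.neighborFinset z)) (le_refl I) :
          (G.neighborFinset z ∩ I) ⊆ (G.neighborFinset z ∩ I))
      have h2 : ((G.neighborFinset z ∩ I) ∩ ({v, x} : Finset V)).card ≤ 2 := by
        calc ((G.neighborFinset z ∩ I) ∩ ({v, x} : Finset V)).card
            ≤ ({v, x} : Finset V).card := Finset.card_le_card Finset.inter_subset_right
          _ ≤ 2 := Finset.card_insert_le _ _ |>.trans (by simp)
      have h3 := Finset.card_inter_add_card_sdiff (G.neighborFinset z ∩ I) ({v, x} : Finset V)
      omega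
    rcases Finset.mem_sdiff.1 hw with ⟨hwzI, hwvx⟩
    simp only [Finset.mem_insert, Finset.mem_singleton] at hwvx
    push_neg at hwvx
    have hwI : w ∈ I := (Finset.mem_inter.1 hwzI).2
    have hzw : G.Adj z w := (SimpleGraph.mem_neighborFinset _ _ _).1 (Finset.mem_inter.1 hwzI).1
    have hwv : w ≠ v := hwvx.1
    have hwx : w ≠ x := hwvx.2
    have hwz : w ≠ z := hzw.ne'
    -- U-degree sum bound for z and w
    have hsum4 : (G.neighborFinset v ∩ U).card + ((G.neighborFinset x ∩ U).card
        + ((G.neighborFinset z ∩ U).card + (G.neighborFinset w ∩ U).card)) ≤ U.card := by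
      have hsub : ({v, x, z, w} : Finset V) ⊆ I := by
        intro y hy
        rcases Finset.mem_insert.1 hy with rfl | hy
        · exact hv
        rcases Finset.mem_insert.1 hy with rfl | hy
        · exact hx
        rcases Finset.mem_insert.1 hy with rfl | hy
        · exact hzI
        rcases Finset.mem_singleton.1 hy with rfl
        exact hwI
      have hQ : ∑ y ∈ ({v, x, z, w} : Finset V), (G.neighborFinset y ∩ U).card
          ≤ ∑ y ∈ I, (G.neighborFinset y ∩ U).card := Finset.sum_le_sum_of_subset hsub
      have hsum4' : ∑ y ∈ ({v, x, z, w} : Finset V), (G.neighborFinset y ∩ U).card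
          = (G.neighborFinset v ∩ U).card + ((G.neighborFinset x ∩ U).card
            + ((G.neighborFinset z ∩ U).card + (G.neighborFinset w ∩ U).card)) := by
        rw [Finset.sum_insert, Finset.sum_insert, Finset.sum_insert, Finset.sum_singleton]
        · simp only [Finset.mem_singleton]
          exact hwz.symm
        · simp only [Finset.mem_insert, Finset.mem_singleton]
          push_neg
          exact ⟨fun h => hzx h.symm, fun h => hwx h.symm⟩
        · simp only [Finset.mem_insert, Finset.mem_singleton]
          push_neg
          exact ⟨fun h => hxv h.symm, fun h => hzv h.symm, fun h => hwv h.symm⟩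
      rw [hsum4'] at hQ
      omega
    -- common I-neighbour y of z and w
    obtain ⟨y, hy⟩ : ((G.neighborFinset z ∩ I) ∩ (G.neighborFinset w ∩ I)).Nonempty := by
      rw [← Finset.card_pos]
      have h1 := card_inter_ge (Finset.inter_subset_right :
        (G.neighborFinset z ∩ I) ⊆ I) (Finset.inter_subset_right :
        (G.neighborFinset w ∩ I) ⊆ I)
      have h2 := hdegI z hzI
      have h3 := hdegI w hwI
      have h4 := hsplit z
      have h5 := hsplit w
      omega
    rcases Finset.mem_inter.1 hy with ⟨hy1, hy2⟩
    have hyI : y ∈ I := (Finset.mem_inter.1 hy1).2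
    have hzy : G.Adj z y := (SimpleGraph.mem_neighborFinset _ _ _).1 (Finset.mem_inter.1 hy1).1
    have hwy : G.Adj w y := (SimpleGraph.mem_neighborFinset _ _ _).1 (Finset.mem_inter.1 hy2).1
    -- build the closure of {uz, w}
    have huzw : uz ≠ w := fun h => (hUmem.1 huzU) (h ▸ hwI)
    set S := bootClosure G 2 {uz, w} with hSdef
    have huzS : uz ∈ S := mem_closure_pair_left _ _
    have hwS : w ∈ S := mem_closure_pair_right _ _
    have hzS : z ∈ S := join_two huzS hwS huzw hzuz hzw
    have hyS : y ∈ S := join_two hzS hwS (fun h => hwz h.symm) hzy.symm hwy.symm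
    have h3S : 3 ≤ (I ∩ S).card := by
      have hsub : ({z, w, y} : Finset V) ⊆ I ∩ S := by
        intro t ht
        rcases Finset.mem_insert.1 ht with rfl | ht
        · exact Finset.mem_inter.2 ⟨hzI, hzS⟩
        rcases Finset.mem_insert.1 ht with rfl | ht
        · exact Finset.mem_inter.2 ⟨hwI, hwS⟩
        rcases Finset.mem_singleton.1 ht with rfl
        exact Finset.mem_inter.2 ⟨hyI, hyS⟩
      have hcard : ({z, w, y} : Finset V).card = 3 := by
        rw [Finset.card_insert_of_notMem, Finset.card_insert_of_notMem,
          Finset.card_singleton]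
        · simp only [Finset.mem_singleton]
          exact hwy.ne
        · simp only [Finset.mem_insert, Finset.mem_singleton]
          push_neg
          exact ⟨fun h => hwz h.symm, hzy.ne⟩
      calc (3:ℕ) = _ := hcard.symm
        _ ≤ (I ∩ S).card := Finset.card_le_card hsub
    have hIsub := hcl2 uz w z huzw hzI hzv hzx hzU hzS h3S
    have hfin : insert uz I ⊆ S := by
      intro t ht
      rcases Finset.mem_insert.1 ht with rfl | ht
      · exact huzS
      exact hIsub ht
    have hcardfin : (insert uz I).card = I.card + 1 :=
      Finset.card_insert_of_notMem (hUmem.1 huzU)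
    have h1 := Finset.card_le_card hfin
    have h2 : S.card ≤ I.card := hpair uz w huzw
    omega
  -- CASCADE TO ALL OF I
  have hIcasc : ∀ a' b' z1 z2 : V, a' ≠ b' →
      (∀ u ∈ U, u ∈ bootClosure G 2 {a', b'}) →
      v ∈ bootClosure G 2 {a', b'} →
      z1 ∈ I → z2 ∈ I → z1 ≠ z2 → z1 ≠ v → z2 ≠ v →
      z1 ∈ bootClosure G 2 {a', b'} → z2 ∈ bootClosure G 2 {a', b'} →
      I ⊆ bootClosure G 2 {a', b'} := by
    intro a' b' z1 z2 hab hUcl hvcl hz1I hz2I h12 h1v h2v h1cl h2cl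
    have hstep : ∀ y ∈ I, y ≠ v → y ≠ x → y ≠ z1 → y ≠ z2 →
        y ∈ bootClosure G 2 {a', b'} := by
      intro y hyI hyv hyx hy1 hy2
      have hdUy := hbul2 y hyI hyv hyx
      have hXc : I.card ≤ (G.neighborFinset y ∩ I).card + 2 := by
        have h1 := hdegI y hyI
        have h2 := hsplit y
        omega
      have hXsub : G.neighborFinset y ∩ I ⊆ I.erase y := by
        intro w hw
        rcases Finset.mem_inter.1 hw with ⟨hw1, hw2⟩
        exact Finset.mem_erase.2 ⟨((SimpleGraph.mem_neighborFinset _ _ _).1 hw1).ne', hw2⟩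
      have hYsub : ({v, z1, z2} : Finset V) ⊆ I.erase y := by
        intro w hw
        rcases Finset.mem_insert.1 hw with rfl | hw
        · exact Finset.mem_erase.2 ⟨fun h => hyv h.symm, hv⟩
        rcases Finset.mem_insert.1 hw with rfl | hw
        · exact Finset.mem_erase.2 ⟨fun h => hy1 h.symm, hz1I⟩
        rcases Finset.mem_singleton.1 hw with rfl
        exact Finset.mem_erase.2 ⟨fun h => hy2 h.symm, hz2I⟩
      have hY3 : ({v, z1, z2} : Finset V).card = 3 := by
        rw [Finset.card_insert_of_notMem, Finset.card_insert_of_notMem,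
          Finset.card_singleton]
        · simp only [Finset.mem_singleton]
          exact h12
        · simp only [Finset.mem_insert, Finset.mem_singleton]
          push_neg
          exact ⟨fun h => h1v h.symm, fun h => h2v h.symm⟩
      have hIe : (I.erase y).card = I.card - 1 := Finset.card_erase_of_mem hyI
      have hint := card_inter_ge hXsub hYsub
      have h1I : 1 ≤ I.card := Finset.card_pos.2 ⟨v, hv⟩
      have h2card : 1 < ((G.neighborFinset y ∩ I) ∩ ({v, z1, z2} : Finset V)).card := by
        omega
      obtain ⟨a1, ha1, a2, ha2, ha12⟩ := Finset.one_lt_card.1 h2card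
      have hmem : ∀ w ∈ (G.neighborFinset y ∩ I) ∩ ({v, z1, z2} : Finset V),
          G.Adj y w ∧ w ∈ bootClosure G 2 {a', b'} := by
        intro w hw
        rcases Finset.mem_inter.1 hw with ⟨hwX, hwY⟩
        refine ⟨(SimpleGraph.mem_neighborFinset _ _ _).1 (Finset.mem_inter.1 hwX).1, ?_⟩
        rcases Finset.mem_insert.1 hwY with rfl | hwY
        · exact hvcl
        rcases Finset.mem_insert.1 hwY with rfl | hwY
        · exact h1cl
        rcases Finset.mem_singleton.1 hwY with rfl
        exact h2cl
      obtain ⟨hya1, ha1cl⟩ := hmem a1 ha1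
      obtain ⟨hya2, ha2cl⟩ := hmem a2 ha2
      exact join_two ha1cl ha2cl ha12 hya1 hya2
    have hxcl : x ∈ bootClosure G 2 {a', b'} := by
      by_cases hx1' : x = z1
      · exact hx1' ▸ h1cl
      by_cases hx2' : x = z2
      · exact hx2' ▸ h2cl
      have hdIx : 1 ≤ (G.neighborFinset x ∩ I).card := by
        have h1 := hdegI x hx
        have h2 := hsplit x
        have hsub : ({v, x} : Finset V) ⊆ I := by
          intro w hw
          rcases Finset.mem_insert.1 hw with rfl | hw
          · exact hv
          rcases Finset.mem_singleton.1 hw with rfl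
          exact hx
        have hQ : ∑ y ∈ ({v, x} : Finset V), (G.neighborFinset y ∩ U).card
            ≤ ∑ y ∈ I, (G.neighborFinset y ∩ U).card := Finset.sum_le_sum_of_subset hsub
        have hsumvx : ∑ y ∈ ({v, x} : Finset V), (G.neighborFinset y ∩ U).card
            = (G.neighborFinset v ∩ U).card + (G.neighborFinset x ∩ U).card := by
          rw [Finset.sum_insert, Finset.sum_singleton]
          simp only [Finset.mem_singleton]
          exact fun h => hxv h.symm
        rw [hsumvx] at hQ
        omega
      obtain ⟨w'', hw''⟩ := Finset.card_pos.1 hdIx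
      rcases Finset.mem_inter.1 hw'' with ⟨hw''n, hw''I⟩
      have hxw'' : G.Adj x w'' := (SimpleGraph.mem_neighborFinset _ _ _).1 hw''n
      have hw''cl : w'' ∈ bootClosure G 2 {a', b'} := by
        by_cases h1 : w'' = v
        · exact h1 ▸ hvcl
        by_cases h2 : w'' = z1
        · exact h2 ▸ h1cl
        by_cases h3 : w'' = z2
        · exact h3 ▸ h2cl
        exact hstep w'' hw''I h1 hxw''.ne' h2 h3
      exact join_two (hUcl ux huxU) hw''cl
        (fun h => huxnI (h ▸ hw''I)) hxux hxw''
    intro y hy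
    by_cases h1 : y = v
    · exact h1 ▸ hvcl
    by_cases h2 : y = x
    · exact h2 ▸ hxcl
    by_cases h3 : y = z1
    · exact h3 ▸ h1cl
    by_cases h4 : y = z2
    · exact h4 ▸ h2cl
    exact hstep y hy h1 h2 h3 h4
  -- BULLET 3 : x has exactly one neighbour in U
  have hbul3 : (G.neighborFinset x ∩ U).card = 1 := by
    refine le_antisymm ?_ (Finset.card_pos.2 ⟨ux, huxmem⟩)
    by_contra hcon
    push_neg at hcon
    have hdIv2 : 2 ≤ (G.neighborFinset v ∩ I).card := by
      have h1 := hdegI v hv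
      have h2 := hsplit v
      have hsub : ({v, x} : Finset V) ⊆ I := by
        intro w hw
        rcases Finset.mem_insert.1 hw with rfl | hw
        · exact hv
        rcases Finset.mem_singleton.1 hw with rfl
        exact hx
      have hQ : ∑ y ∈ ({v, x} : Finset V), (G.neighborFinset y ∩ U).card
          ≤ ∑ y ∈ I, (G.neighborFinset y ∩ U).card := Finset.sum_le_sum_of_subset hsub
      have hsumvx : ∑ y ∈ ({v, x} : Finset V), (G.neighborFinset y ∩ U).card
          = (G.neighborFinset v ∩ U).card + (G.neighborFinset x ∩ U).card := by
        rw [Finset.sum_insert, Finset.sum_singleton]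
        simp only [Finset.mem_singleton]
        exact fun h => hxv h.symm
      rw [hsumvx] at hQ
      omega
    obtain ⟨w, hwmem⟩ : ((G.neighborFinset v ∩ I) \ ({x} : Finset V)).Nonempty := by
      rw [← Finset.card_pos]
      have h1 := Finset.card_inter_add_card_sdiff (G.neighborFinset v ∩ I) ({x} : Finset V)
      have h2 : ((G.neighborFinset v ∩ I) ∩ ({x} : Finset V)).card ≤ 1 := by
        calc ((G.neighborFinset v ∩ I) ∩ ({x} : Finset V)).card
            ≤ ({x} : Finset V).card := Finset.card_le_card Finset.inter_subset_right
          _ = 1 := Finset.card_singleton x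
      omega
    rcases Finset.mem_sdiff.1 hwmem with ⟨hwvI, hwx'⟩
    rw [Finset.mem_singleton] at hwx'
    have hwI : w ∈ I := (Finset.mem_inter.1 hwvI).2
    have hvw : G.Adj v w := (SimpleGraph.mem_neighborFinset _ _ _).1 (Finset.mem_inter.1 hwvI).1
    have hwv : w ≠ v := hvw.ne'
    have hu1w : u1 ≠ w := fun h => hu1nI (h ▸ hwI)
    have hsubT := hJfull w hwI hvw
    have hwT : w ∈ bootClosure G 2 {u1, w} := hsubT (Finset.mem_insert_self _ _)
    have hvT : v ∈ bootClosure G 2 {u1, w} :=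
      hsubT (Finset.mem_insert_of_mem (Finset.mem_insert_self _ _))
    have hUT : ∀ u ∈ U, u ∈ bootClosure G 2 {u1, w} := fun u hu =>
      hsubT (Finset.mem_insert_of_mem (Finset.mem_insert_of_mem hu))
    obtain ⟨ua, hua, ub, hub, huab⟩ := Finset.one_lt_card.1 hcon
    have hxT : x ∈ bootClosure G 2 {u1, w} :=
      join_two (hUT ua (Finset.mem_inter.1 hua).2) (hUT ub (Finset.mem_inter.1 hub).2) huab
        ((SimpleGraph.mem_neighborFinset _ _ _).1 (Finset.mem_inter.1 hua).1)
        ((SimpleGraph.mem_neighborFinset _ _ _).1 (Finset.mem_inter.1 hub).1)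
    have hIsub := hIcasc u1 w w x hu1w hUT hvT hwI hx hwx' hwv hxv hwT hxT
    have hfin : insert u1 I ⊆ bootClosure G 2 {u1, w} := by
      intro y hy
      rcases Finset.mem_insert.1 hy with rfl | hy
      · exact mem_closure_pair_left _ _
      exact hIsub hy
    have h1 := Finset.card_le_card hfin
    have h2 := hpair u1 w hu1w
    have h3 : (insert u1 I).card = I.card + 1 := Finset.card_insert_of_notMem hu1nI
    omega
  -- BULLET 1 : v has exactly one neighbour in I
  have hvUle : (G.neighborFinset v ∩ U).card + 1 ≤ U.card := by
    have hsub : G.neighborFinset v ∩ U ⊆ U.erase ux := by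
      intro w hw
      rcases Finset.mem_inter.1 hw with ⟨h1, h2⟩
      refine Finset.mem_erase.2 ⟨?_, h2⟩
      intro h
      exact hvux (h ▸ (SimpleGraph.mem_neighborFinset _ _ _).1 h1)
    have h1 := Finset.card_le_card hsub
    have h2 : (U.erase ux).card = U.card - 1 := Finset.card_erase_of_mem huxU
    omega
  have hbul1 : (G.neighborFinset v ∩ I).card = 1 := by
    refine le_antisymm ?_ ?_
    · by_contra hcon
      push_neg at hcon
      obtain ⟨w1, hw1, w2, hw2, hw12⟩ := Finset.one_lt_card.1 hcon
      obtain ⟨wa, hwa, wb, hwb, hwab, hwax⟩ :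
          ∃ wa ∈ G.neighborFinset v ∩ I, ∃ wb ∈ G.neighborFinset v ∩ I,
            wa ≠ wb ∧ wa ≠ x := by
        by_cases h : w1 = x
        · refine ⟨w2, hw2, w1, hw1, hw12.symm, ?_⟩
          intro hh
          exact hw12 (h ▸ hh ▸ rfl)
        · exact ⟨w1, hw1, w2, hw2, hw12, h⟩
      have hwaI : wa ∈ I := (Finset.mem_inter.1 hwa).2
      have hvwa : G.Adj v wa := (SimpleGraph.mem_neighborFinset _ _ _).1 (Finset.mem_inter.1 hwa).1
      have hwbI : wb ∈ I := (Finset.mem_inter.1 hwb).2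
      have hvwb : G.Adj v wb := (SimpleGraph.mem_neighborFinset _ _ _).1 (Finset.mem_inter.1 hwb).1
      have hwav : wa ≠ v := hvwa.ne'
      have hwbv : wb ≠ v := hvwb.ne'
      have hu1wa : u1 ≠ wa := fun h => hu1nI (h ▸ hwaI)
      have hsubT := hJfull wa hwaI hvwa
      have hwaT : wa ∈ bootClosure G 2 {u1, wa} := hsubT (Finset.mem_insert_self _ _)
      have hvT : v ∈ bootClosure G 2 {u1, wa} :=
        hsubT (Finset.mem_insert_of_mem (Finset.mem_insert_self _ _))
      have hUT : ∀ u ∈ U, u ∈ bootClosure G 2 {u1, wa} := fun u hu =>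
        hsubT (Finset.mem_insert_of_mem (Finset.mem_insert_of_mem hu))
      have hfinish : x ∈ bootClosure G 2 {u1, wa} ∨
          (wb ∈ bootClosure G 2 {u1, wa} ∧ wb ≠ x) → False := by
        intro hcase
        have hIsub : I ⊆ bootClosure G 2 {u1, wa} := by
          rcases hcase with hxT | ⟨hwbT, hwbx⟩
          · exact hIcasc u1 wa wa x hu1wa hUT hvT hwaI hx hwax hwav hxv hwaT hxT
          · exact hIcasc u1 wa wa wb hu1wa hUT hvT hwaI hwbI
              (fun h => hwab h) hwav hwbv hwaT hwbT
        have hfin : insert u1 I ⊆ bootClosure G 2 {u1, wa} := by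
          intro y hy
          rcases Finset.mem_insert.1 hy with rfl | hy
          · exact mem_closure_pair_left _ _
          exact hIsub hy
        have h1 := Finset.card_le_card hfin
        have h2 := hpair u1 wa hu1wa
        have h3 : (insert u1 I).card = I.card + 1 := Finset.card_insert_of_notMem hu1nI
        omega
      by_cases hwbx : wb = x
      · exact hfinish (Or.inl (join_two (hUT ux huxU) hvT
          (fun h => huxnI (h ▸ hv)) hxux (hwbx ▸ hvwb).symm))
      by_cases hxwa : G.Adj x wa
      · exact hfinish (Or.inl (join_two (hUT ux huxU) hwaT
          (fun h => huxnI (h ▸ hwaI)) hxux hxwa))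
      · -- wa is adjacent to everything in I except x
        have hdUwa := hbul2 wa hwaI hwav hwax
        have hdIwa : I.card ≤ (G.neighborFinset wa ∩ I).card + 2 := by
          have h1 := hdegI wa hwaI
          have h2 := hsplit wa
          omega
        have hsubwa : G.neighborFinset wa ∩ I ⊆ (I.erase wa).erase x := by
          intro w hw
          rcases Finset.mem_inter.1 hw with ⟨h1, h2⟩
          have hadj : G.Adj wa w := (SimpleGraph.mem_neighborFinset _ _ _).1 h1
          refine Finset.mem_erase.2 ⟨?_, Finset.mem_erase.2 ⟨hadj.ne', h2⟩⟩
          intro h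
          exact hxwa (h ▸ hadj).symm
        have hxewa : x ∈ I.erase wa := Finset.mem_erase.2 ⟨fun h => hwax h.symm, hx⟩
        have hc1 : (I.erase wa).card = I.card - 1 := Finset.card_erase_of_mem hwaI
        have hc2 : ((I.erase wa).erase x).card = (I.erase wa).card - 1 :=
          Finset.card_erase_of_mem hxewa
        have hwbmem : wb ∈ (I.erase wa).erase x :=
          Finset.mem_erase.2 ⟨hwbx, Finset.mem_erase.2 ⟨fun h => hwab h.symm, hwbI⟩⟩
        have heq : G.neighborFinset wa ∩ I = (I.erase wa).erase x := by
          apply Finset.eq_of_subset_of_card_le hsubwa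
          have h1I : 1 ≤ (I.erase wa).card := Finset.card_pos.2 ⟨x, hxewa⟩
          omega
        rw [← heq] at hwbmem
        have hwawb : G.Adj wa wb :=
          (SimpleGraph.mem_neighborFinset _ _ _).1 (Finset.mem_inter.1 hwbmem).1
        have hwbT : wb ∈ bootClosure G 2 {u1, wa} :=
          join_two hvT hwaT hwav.symm hvwb.symm hwawb.symm
        exact hfinish (Or.inr ⟨hwbT, hwbx⟩)
    · have h1 := hdegI v hv
      have h2 := hsplit v
      omega
  -- FINAL ASSEMBLY
  have hNxeq : G.neighborFinset x ∩ U = {ux} := by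
    obtain ⟨a0, ha0⟩ := Finset.card_eq_one.1 hbul3
    have : ux ∈ ({a0} : Finset V) := ha0 ▸ huxmem
    rw [Finset.mem_singleton] at this
    rw [ha0, this]
  refine ⟨hbul1, ?_, hbul3, ?_⟩
  · intro z hzI hzne
    by_contra hcon
    push_neg at hcon
    have h0 := hbul2 z hzI hcon.1 hcon.2
    have h1 : 0 < (G.neighborFinset z ∩ U).card := Finset.card_pos.2 hzne
    omega
  · intro u huU'
    have huU : u ∈ U := huU'
    by_cases hu : u = ux
    · subst hu
      exact iff_of_false hvux (fun h => h hxux)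
    · have hxu : ¬ G.Adj x u := by
        intro h
        have hmem : u ∈ G.neighborFinset x ∩ U :=
          Finset.mem_inter.2 ⟨(SimpleGraph.mem_neighborFinset _ _ _).2 h, huU⟩
        rw [hNxeq] at hmem
        exact hu (Finset.mem_singleton.1 hmem)
      have hvu : G.Adj v u := by
        by_contra hnadj
        have hunI : u ∉ I := hUmem.1 huU
        have hNuI : (G.neighborFinset u ∩ I).card = 0 := by
          rw [Finset.card_eq_zero, Finset.eq_empty_iff_forall_notMem]
          intro w hw
          rcases Finset.mem_inter.1 hw with ⟨hw1, hw2⟩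
          have huw : G.Adj u w := (SimpleGraph.mem_neighborFinset _ _ _).1 hw1
          by_cases h1 : w = v
          · exact hnadj (h1 ▸ huw).symm
          by_cases h2 : w = x
          · exact hxu (h2 ▸ huw).symm
          have h0 := hbul2 w hw2 h1 h2
          have h3 : 0 < (G.neighborFinset w ∩ U).card :=
            Finset.card_pos.2 ⟨u, Finset.mem_inter.2
              ⟨(SimpleGraph.mem_neighborFinset _ _ _).2 huw.symm, huU⟩⟩
          omega
        have hdu := hsplit u
        have hduU : (G.neighborFinset u ∩ U).card + 1 ≤ U.card := by
          have hsub : G.neighborFinset u ∩ U ⊆ U.erase u := by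
            intro w hw
            rcases Finset.mem_inter.1 hw with ⟨h1, h2⟩
            exact Finset.mem_erase.2 ⟨((SimpleGraph.mem_neighborFinset _ _ _).1 h1).ne', h2⟩
          have h1 := Finset.card_le_card hsub
          have h2 : (U.erase u).card = U.card - 1 := Finset.card_erase_of_mem huU
          omega
        have hdv := hsplit v
        have hOre := hdeg v u (fun h => hunI (h ▸ hv)) hnadj
        omega
      exact iff_of_true hvu hxu
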